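/- arXiv:1311.6455 — 6 statements merged into one kernel-verified Lean document; each statement's English description precedes it below -/
import Mathlib

section
/- (Main factorization, square case n = m) Let P(x), Q(y) be m×m polynomial matrices such that: (i) the lower triangular part of Q including the diagonal has constant columns, i.e., Q_{i,j}(y) = q_{j−1}(y) for all i ≥ j, where q_0 = 1 and each q_k is monic of degree k; (ii) the strictly upper triangular part of P has constant rows, i.e., P_{i,j}(x) = p_{i−1}(x) for all i < j, where p_0 = 1 and each p_k is monic of degree k; the remaining entries of P and Q are arbitrary polynomials. Then for any points x1,...,xm and y1,...,ym, the Vandermonde determinant of the m² bivariate polynomials (P∘Q)_{i,j}(x,y) = P_{i,j}(x)Q_{i,j}(y) at the m² grid points (x_k, y_l) equals ± (∏_{j=1}^{m} vdm(X, P_{:,j})) · (∏_{i=1}^{m} vdm(Y, Q_{i,:})), where vdm(X, P_{:,j}) is the m×m determinant det[P_{i,j}(x_k)]_{k,i} and vdm(Y, Q_{i,:}) is the m×m determinant det[Q_{i,j}(y_l)]_{l,j}. -/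
/-!
Write `F i j = (P i j (x k))ₖ` and `G i j = (Q i j (y l))ₗ`, and let `U = (p s (x k))` and
`V = (q r (y l))`, invertible by Vandermonde when the points are distinct. The grid matrix of
`(F, G)` is `(U ⊗ₖ V)` times the grid matrix of `(U⁻¹ F, V⁻¹ G)`, in which the constant rows of `P`
and constant columns of `Q` have become standard basis vectors. That normalized grid matrix is
block triangular, and its diagonal blocks are, after discarding identity blocks, the column
matrices of `U⁻¹ F` and the row matrices of `V⁻¹ G`; the factors `det U ^ m` and `det V ^ m`
reappear on both sides. If a point is repeated, both sides vanish. The sign is always `+1`.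
-/

open Matrix Kronecker Polynomial

namespace GridVandermonde

variable {n R : Type*} [CommRing R]

/-- Rows are grid points `(k, l)`, columns positions `(i, j)`; `F i j k` plays the role of
`P i j (x k)` and `G i j l` that of `Q i j (y l)`. -/
def gridMatrix (F G : n → n → n → R) : Matrix (n × n) (n × n) R :=
  of fun kl ij => F ij.1 ij.2 kl.1 * G ij.1 ij.2 kl.2

section Fintype

variable [Fintype n]

theorem gridMatrix_mulVec (U V : Matrix n n R) (F G : n → n → n → R) :
    gridMatrix (fun i j => U *ᵥ F i j) (fun i j => V *ᵥ G i j) = (U ⊗ₖ V) * gridMatrix F G := by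
  ext ⟨k, l⟩ ⟨i, j⟩
  simp only [gridMatrix, of_apply, mul_apply, Fintype.sum_prod_type, kroneckerMap_apply,
    mulVec, dotProduct, Finset.sum_mul_sum]
  exact Finset.sum_congr rfl fun s _ => Finset.sum_congr rfl fun r _ => by ring

variable [DecidableEq n]

theorem det_of_mulVec (U : Matrix n n R) (F : n → n → R) :
    (of fun k i => (U *ᵥ F i) k).det = U.det * (of fun k i => F i k).det := by
  have : (of fun k i => (U *ᵥ F i) k) = U * of fun k i => F i k := by
    ext k i; simp [mul_apply, mulVec, dotProduct]
  rw [this, det_mul]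

theorem det_eq_det_toSquareBlockProp_of_col_eq_single (M : Matrix n n R)
    (p : n → Prop) [DecidablePred p] (hM : ∀ i, p i → ∀ k, M k i = (Pi.single i 1 : n → R) k) :
    M.det = (M.toSquareBlockProp fun i => ¬ p i).det := by
  rw [M.twoBlockTriangular_det p fun k hk i hi => ?_]
  · suffices M.toSquareBlockProp p = 1 by rw [this, det_one, one_mul]
    ext ⟨k, hk⟩ ⟨i, hi⟩
    simp [toSquareBlockProp_def, hM i hi, Pi.single_apply, one_apply, Subtype.ext_iff]
  · rw [hM i hi, Pi.single_apply, if_neg (by rintro rfl; exact hk hi)]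

theorem det_gridMatrix_eq_prod_of_eq_left {F G : n → n → n → R} {k k' : n} (hk : k ≠ k')
    (hF : ∀ i j, F i j k = F i j k') :
    (gridMatrix F G).det =
      (∏ j, (of fun k i => F i j k).det) * ∏ i, (of fun l j => G i j l).det := by
  rw [det_zero_of_row_eq (i := (k, k)) (j := (k', k)) (by simpa using hk)
    (funext fun ij => by simp [gridMatrix, hF]), eq_comm]
  exact mul_eq_zero_of_left (Finset.prod_eq_zero (Finset.mem_univ k)
    (det_zero_of_row_eq hk (funext fun i => by simp [hF]))) _

theorem det_gridMatrix_eq_prod_of_eq_right {F G : n → n → n → R} {l l' : n} (hl : l ≠ l')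
    (hG : ∀ i j, G i j l = G i j l') :
    (gridMatrix F G).det =
      (∏ j, (of fun k i => F i j k).det) * ∏ i, (of fun l j => G i j l).det := by
  rw [det_zero_of_row_eq (i := (l, l)) (j := (l, l')) (by simpa using hl)
    (funext fun ij => by simp [gridMatrix, hG]), eq_comm]
  exact mul_eq_zero_of_right _ (Finset.prod_eq_zero (Finset.mem_univ l)
    (det_zero_of_row_eq hl (funext fun j => by simp [hG])))

end Fintype

section LinearOrder

variable [LinearOrder n]

def blockLabel (sr : n × n) : Lex (n × Bool) :=
  if sr.2 ≤ sr.1 then toLex (sr.2, false) else toLex (sr.1, true)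

theorem blockLabel_eq_false_iff {sr : n × n} {j : n} :
    blockLabel sr = toLex (j, false) ↔ sr.2 = j ∧ j ≤ sr.1 := by
  unfold blockLabel; split_ifs with h
  · simp only [toLex_inj, Prod.mk.injEq, and_true]
    constructor
    · rintro rfl; exact ⟨rfl, h⟩
    · exact And.left
  · simp only [toLex_inj, Prod.mk.injEq, Bool.true_eq_false, and_false, false_iff]
    rintro ⟨rfl, h'⟩; exact h h'

theorem blockLabel_eq_true_iff {sr : n × n} {i : n} :
    blockLabel sr = toLex (i, true) ↔ sr.1 = i ∧ i < sr.2 := by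
  unfold blockLabel; split_ifs with h
  · simp only [toLex_inj, Prod.mk.injEq, Bool.false_eq_true, and_false, false_iff]
    rintro ⟨rfl, h'⟩; exact absurd h (not_le.2 h')
  · simp only [toLex_inj, Prod.mk.injEq, and_true]
    constructor
    · rintro rfl; exact ⟨rfl, not_le.1 h⟩
    · exact And.left

def blockLabelFalseEquiv (j : n) : {sr // blockLabel sr = toLex (j, false)} ≃ {s // ¬ s < j} where
  toFun sr := ⟨sr.1.1, not_lt.2 (blockLabel_eq_false_iff.1 sr.2).2⟩
  invFun s := ⟨(s.1, j), blockLabel_eq_false_iff.2 ⟨rfl, not_lt.1 s.2⟩⟩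
  left_inv sr := Subtype.ext (Prod.ext rfl (blockLabel_eq_false_iff.1 sr.2).1.symm)
  right_inv _ := rfl

def blockLabelTrueEquiv (i : n) : {sr // blockLabel sr = toLex (i, true)} ≃ {r // ¬ r ≤ i} where
  toFun sr := ⟨sr.1.2, not_le.2 (blockLabel_eq_true_iff.1 sr.2).2⟩
  invFun r := ⟨(i, r.1), blockLabel_eq_true_iff.2 ⟨rfl, not_le.1 r.2⟩⟩
  left_inv sr := Subtype.ext (Prod.ext (blockLabel_eq_true_iff.1 sr.2).1.symm rfl)
  right_inv _ := rfl

variable {F G : n → n → n → R}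

theorem gridMatrix_blockTriangular
    (hF : ∀ i j, i < j → F i j = Pi.single i 1) (hG : ∀ i j, j ≤ i → G i j = Pi.single j 1) :
    (gridMatrix F G).BlockTriangular blockLabel := by
  rintro ⟨s, r⟩ ⟨i, j⟩ h
  simp only [gridMatrix, of_apply]
  rcases le_or_gt j i with hji | hij
  · rw [hG i j hji, Pi.single_apply, if_neg, mul_zero]
    rintro rfl
    simp only [blockLabel, if_pos hji] at h
    split_ifs at h <;> simp [Prod.Lex.toLex_lt_toLex, Bool.lt_iff] at h; grind
  · rw [hF i j hij, Pi.single_apply, if_neg, zero_mul]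
    rintro rfl
    simp only [blockLabel, if_neg (not_le.2 hij)] at h
    split_ifs at h <;> simp [Prod.Lex.toLex_lt_toLex, Bool.lt_iff] at h; grind

variable [Fintype n]

theorem det_toSquareBlock_gridMatrix_false
    (hF : ∀ i j, i < j → F i j = Pi.single i 1) (hG : ∀ i j, j ≤ i → G i j = Pi.single j 1)
    (j : n) :
    ((gridMatrix F G).toSquareBlock blockLabel (toLex (j, false))).det =
      (of fun k i => F i j k).det := by
  rw [det_eq_det_toSquareBlockProp_of_col_eq_single _ (· < j) fun i hi k => by simp [hF i j hi],
    ← det_submatrix_equiv_self (blockLabelFalseEquiv j)]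
  congr 1
  ext ⟨⟨s, r⟩, hsr⟩ ⟨⟨i, j'⟩, hij'⟩
  obtain ⟨hr, -⟩ := blockLabel_eq_false_iff.1 hsr
  obtain ⟨hj', hji⟩ := blockLabel_eq_false_iff.1 hij'
  dsimp only at hr hj' hji
  subst r j'
  simp [toSquareBlock_def, toSquareBlockProp_def, gridMatrix, blockLabelFalseEquiv, hG i j hji]

theorem det_toSquareBlock_gridMatrix_true
    (hF : ∀ i j, i < j → F i j = Pi.single i 1) (hG : ∀ i j, j ≤ i → G i j = Pi.single j 1)
    (i : n) :
    ((gridMatrix F G).toSquareBlock blockLabel (toLex (i, true))).det =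
      (of fun l j => G i j l).det := by
  rw [det_eq_det_toSquareBlockProp_of_col_eq_single _ (· ≤ i) fun j hj l => by simp [hG i j hj],
    ← det_submatrix_equiv_self (blockLabelTrueEquiv i)]
  congr 1
  ext ⟨⟨s, r⟩, hsr⟩ ⟨⟨i', j⟩, hij'⟩
  obtain ⟨hs, -⟩ := blockLabel_eq_true_iff.1 hsr
  obtain ⟨hi', hij⟩ := blockLabel_eq_true_iff.1 hij'
  dsimp only at hs hi' hij
  subst s i'
  simp [toSquareBlock_def, toSquareBlockProp_def, gridMatrix, blockLabelTrueEquiv, hF i j hij]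

theorem det_gridMatrix_of_single
    (hF : ∀ i j, i < j → F i j = Pi.single i 1) (hG : ∀ i j, j ≤ i → G i j = Pi.single j 1) :
    (gridMatrix F G).det =
      (∏ j, (of fun k i => F i j k).det) * ∏ i, (of fun l j => G i j l).det := by
  rw [(gridMatrix_blockTriangular hF hG).det_fintype, ← Equiv.prod_comp toLex,
    Fintype.prod_prod_type, mul_comm, ← Finset.prod_mul_distrib]
  simp only [Fintype.prod_bool, det_toSquareBlock_gridMatrix_false hF hG,
    det_toSquareBlock_gridMatrix_true hF hG]

theorem det_gridMatrix_of_isUnit (U V : Matrix n n R) (hU : IsUnit U.det) (hV : IsUnit V.det)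
    (hF : ∀ i j, i < j → F i j = U.col i) (hG : ∀ i j, j ≤ i → G i j = V.col j) :
    (gridMatrix F G).det =
      (∏ j, (of fun k i => F i j k).det) * ∏ i, (of fun l j => G i j l).det := by
  have inv_mulVec_col {W : Matrix n n R} (hW : IsUnit W.det) (i : n) :
      W⁻¹ *ᵥ W.col i = Pi.single i 1 := by
    rw [← mulVec_single_one, mulVec_mulVec, nonsing_inv_mul _ hW, one_mulVec]
  have hUF : F = fun i j => U *ᵥ (U⁻¹ *ᵥ F i j) := by
    simp only [mulVec_mulVec, mul_nonsing_inv _ hU, one_mulVec]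
  have hVG : G = fun i j => V *ᵥ (V⁻¹ *ᵥ G i j) := by
    simp only [mulVec_mulVec, mul_nonsing_inv _ hV, one_mulVec]
  have hF' : ∀ i j, i < j → U⁻¹ *ᵥ F i j = Pi.single i 1 := fun i j hij => by
    rw [hF i j hij, inv_mulVec_col hU]
  have hG' : ∀ i j, j ≤ i → V⁻¹ *ᵥ G i j = Pi.single j 1 := fun i j hji => by
    rw [hG i j hji, inv_mulVec_col hV]
  rw [hUF, hVG, gridMatrix_mulVec, det_mul, det_kronecker, det_gridMatrix_of_single hF' hG']
  simp only [det_of_mulVec, Finset.prod_mul_distrib, Finset.prod_const, Finset.card_univ]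
  ring

end LinearOrder

theorem isUnit_det_eval_of_monic {K : Type*} [Field K] {m : ℕ} {p : Fin m → K[X]}
    (hp : ∀ k, (p k).Monic ∧ (p k).natDegree = k) {x : Fin m → K} (hx : x.Injective) :
    IsUnit (of fun k s => (p s).eval (x k)).det := by
  rw [isUnit_iff_ne_zero, ← det_eval_matrixOfPolynomials_eq_det_vandermonde x p
    (fun k => (hp k).2) (fun k => (hp k).1)]
  exact det_vandermonde_ne_zero_iff.2 hx

end GridVandermonde

open GridVandermonde

theorem stmt5_general (m : ℕ) (P Q : Fin m → Fin m → Polynomial ℝ)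
    (p q : Fin m → Polynomial ℝ)
    (hpm : ∀ k : Fin m, (p k).Monic ∧ (p k).natDegree = (k : ℕ))
    (hqm : ∀ k : Fin m, (q k).Monic ∧ (q k).natDegree = (k : ℕ))
    (hQ : ∀ i j : Fin m, (j : ℕ) ≤ (i : ℕ) → Q i j = q j)
    (hP : ∀ i j : Fin m, (i : ℕ) < (j : ℕ) → P i j = p i)
    (x y : Fin m → ℝ) :
    ∃ ε : ℝ, (ε = 1 ∨ ε = -1) ∧
      Matrix.det (Matrix.of fun (kl ij : Fin m × Fin m) =>
          (P ij.1 ij.2).eval (x kl.1) * (Q ij.1 ij.2).eval (y kl.2)) =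
      ε * (∏ j : Fin m, Matrix.det (Matrix.of fun k i : Fin m => (P i j).eval (x k))) *
          (∏ i : Fin m, Matrix.det (Matrix.of fun l j : Fin m => (Q i j).eval (y l))) := by
  refine ⟨1, Or.inl rfl, ?_⟩
  rw [one_mul]
  change (gridMatrix (fun i j k => (P i j).eval (x k)) (fun i j l => (Q i j).eval (y l))).det = _
  by_cases hx : x.Injective
  swap
  · obtain ⟨k, k', hxk, hk⟩ := Function.not_injective_iff.1 hx
    exact det_gridMatrix_eq_prod_of_eq_left hk fun i j => by rw [hxk]
  by_cases hy : y.Injective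
  swap
  · obtain ⟨l, l', hyl, hl⟩ := Function.not_injective_iff.1 hy
    exact det_gridMatrix_eq_prod_of_eq_right hl fun i j => by rw [hyl]
  exact det_gridMatrix_of_isUnit _ _ (isUnit_det_eval_of_monic hpm hx)
    (isUnit_det_eval_of_monic hqm hy) (fun i j hij => funext fun k => by simp [hP i j hij])
    (fun i j hji => funext fun l => by simp [hQ i j hji])

/-- main factorization, square case n = m: if the lower triangle of Q
(including the diagonal) has constant columns Q_{i,j} = q_{j-1} (q_0 = 1, q_k monic of
degree k) and the strict upper triangle of P has constant rows P_{i,j} = p_{i-1}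
(p_0 = 1, p_k monic of degree k), then the grid Vandermonde determinant of P∘Q factors
as ± ∏_j vdm(X, P_{:,j}) · ∏_i vdm(Y, Q_{i,:}). -/
theorem stmt5 (m : ℕ) (P Q : Fin m → Fin m → Polynomial ℝ)
    (p q : Fin m → Polynomial ℝ)
    (hp0 : ∀ h : 0 < m, p ⟨0, h⟩ = 1) (hq0 : ∀ h : 0 < m, q ⟨0, h⟩ = 1)
    (hpm : ∀ k : Fin m, (p k).Monic ∧ (p k).natDegree = (k : ℕ))
    (hqm : ∀ k : Fin m, (q k).Monic ∧ (q k).natDegree = (k : ℕ))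
    (hQ : ∀ i j : Fin m, (j : ℕ) ≤ (i : ℕ) → Q i j = q j)
    (hP : ∀ i j : Fin m, (i : ℕ) < (j : ℕ) → P i j = p i)
    (x y : Fin m → ℝ) :
    ∃ ε : ℝ, (ε = 1 ∨ ε = -1) ∧
      Matrix.det (Matrix.of fun (kl ij : Fin m × Fin m) =>
          (P ij.1 ij.2).eval (x kl.1) * (Q ij.1 ij.2).eval (y kl.2)) =
      ε * (∏ j : Fin m, Matrix.det (Matrix.of fun k i : Fin m => (P i j).eval (x k))) *
          (∏ i : Fin m, Matrix.det (Matrix.of fun l j : Fin m => (Q i j).eval (y l))) :=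
  stmt5_general m P Q p q hpm hqm hQ hP x y
end

section
/- (Main factorization, almost square case n = m+1) Let P(x), Q(y) be m×(m+1) polynomial matrices such that Q_{i,j}(y) = q_{j−1}(y) for all i+1 ≥ j (with q_0 = 1 and q_k monic of degree k), and P_{i,j}(x) = p_{i−1}(x) for all i+1 < j (with p_0 = 1 and p_k monic of degree k), the remaining entries being arbitrary polynomials. Then for any points x1,...,xm and y1,...,y_{m+1}, the Vandermonde determinant of the m(m+1) bivariate polynomials P_{i,j}(x)Q_{i,j}(y) at the m(m+1) grid points (x_k, y_l) equals ± (∏_{j=1}^{m+1} det[P_{i,j}(x_k)]_{k,i=1}^m) · (∏_{i=1}^{m} det[Q_{i,j}(y_l)]_{l,j=1}^{m+1}). -/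
/-!
Reduce each `P i j` modulo the nodal polynomial of `x` and expand the remainder in the basis
`p 0, …, p (m - 1)`; likewise `Q i j` with `y` and `q`. If `A` and `B` are the resulting
coordinate matrices (columns indexed by the entries `(i, j)`), the grid matrix is
`(V_p(x) ⊗ V_q(y)) * (A ⊙ B)`, with `⊙` the column-wise Kronecker (Khatri–Rao) product, and the
matrices on the right-hand side are `V_p(x) * A_j` and `V_q(y) * B_i`. The hypotheses on `P` and
`Q` make the columns `(i, j)` of `A` with `i + 1 < j`, and those of `B` with `j ≤ i + 1`, standard
basis vectors. Ordering the entries `(i, j)` by `min (2 i + 3) (2 j)` then makes `A ⊙ B` block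
triangular with diagonal blocks `A_j` and `B_i`; the powers of `det V_p(x)` and `det V_q(y)` match
on both sides, and the sign is `+1`.
-/

open Finset Function Matrix Polynomial
open scoped Kronecker

section

variable {ι κ α : Type*} [LinearOrder α] {φ : ι ⊕ κ → α}

theorem Function.Injective.min_eq_inl_iff (hφ : Injective φ) {a i : ι} {b : κ} :
    min (φ (.inl a)) (φ (.inr b)) = φ (.inl i) ↔ a = i ∧ φ (.inl i) < φ (.inr b) := by
  simp only [min_eq_iff, hφ.eq_iff, le_iff_lt_or_eq]
  aesop

theorem Function.Injective.min_eq_inr_iff (hφ : Injective φ) {a : ι} {b j : κ} :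
    min (φ (.inl a)) (φ (.inr b)) = φ (.inr j) ↔ b = j ∧ φ (.inr j) < φ (.inl a) := by
  simp only [min_eq_iff, hφ.eq_iff, le_iff_lt_or_eq]
  aesop

end

namespace Matrix

variable {R : Type*} [CommRing R]

def khatriRao {l m n : Type*} (A : Matrix l n R) (B : Matrix m n R) : Matrix (l × m) n R :=
  of fun r c => A r.1 c * B r.2 c

theorem kronecker_mul_khatriRao {k l m n o : Type*} [Fintype l] [Fintype m]
    (U : Matrix k l R) (W : Matrix n m R) (A : Matrix l o R) (B : Matrix m o R) :
    (U ⊗ₖ W) * khatriRao A B = khatriRao (U * A) (W * B) := by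
  ext ⟨a, b⟩ c
  simp only [khatriRao, mul_apply, of_apply, kroneckerMap_apply, Fintype.sum_prod_type,
    Finset.sum_mul_sum]
  exact Finset.sum_congr rfl fun _ _ => Finset.sum_congr rfl fun _ _ => by ring

theorem det_eq_det_toSquareBlockProp_of_transpose_eq_single {n : Type*} [Fintype n]
    [DecidableEq n] (M : Matrix n n R) (S : n → Prop) [DecidablePred S]
    (h : ∀ c, ¬ S c → Mᵀ c = Pi.single c 1) : M.det = (M.toSquareBlockProp S).det := by
  have hcol : ∀ r c, ¬ S c → M r c = (1 : Matrix n n R) r c := fun r c hc => by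
    rw [← transpose_apply M, h c hc, one_apply, Pi.single_apply]
  have hone : M.toSquareBlockProp (fun c => ¬ S c) = 1 := by
    ext ⟨r, _⟩ ⟨c, hc⟩
    simp [toSquareBlockProp, hcol r c hc, one_apply, Subtype.ext_iff]
  rw [twoBlockTriangular_det' M S fun r hr c hc => by
      rw [hcol r c hc, one_apply_ne fun hrc : r = c => hc (hrc ▸ hr)], hone, det_one, mul_one]

section Interlaced

variable {ι κ α : Type*} [DecidableEq ι] [DecidableEq κ] [LinearOrder α]
  {φ : ι ⊕ κ → α} {A : Matrix ι (ι × κ) R} {B : Matrix κ (ι × κ) R}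

theorem blockTriangular_khatriRao (hφ : Injective φ)
    (hA : ∀ i j, φ (.inl i) < φ (.inr j) → Aᵀ (i, j) = Pi.single i 1)
    (hB : ∀ i j, φ (.inr j) < φ (.inl i) → Bᵀ (i, j) = Pi.single j 1) :
    (khatriRao A B).BlockTriangular fun c => min (φ (.inl c.1)) (φ (.inr c.2)) := by
  rintro ⟨a, b⟩ ⟨i, j⟩ hlt
  simp only [khatriRao, of_apply]
  rcases lt_or_gt_of_ne (hφ.ne Sum.inl_ne_inr : φ (.inl i) ≠ φ (.inr j)) with h | h
  · have hai : a ≠ i := by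
      rintro rfl
      exact (min_le_left _ _).not_gt ((min_eq_left h.le).symm.trans_lt hlt)
    rw [← transpose_apply A, hA i j h, Pi.single_eq_of_ne hai, zero_mul]
  · have hbj : b ≠ j := by
      rintro rfl
      exact (min_le_right _ _).not_gt ((min_eq_right h.le).symm.trans_lt hlt)
    rw [← transpose_apply B, hB i j h, Pi.single_eq_of_ne hbj, mul_zero]

variable [Fintype ι] [Fintype κ]

theorem det_toSquareBlock_khatriRao_inl (hφ : Injective φ)
    (hA : ∀ i j, φ (.inl i) < φ (.inr j) → Aᵀ (i, j) = Pi.single i 1)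
    (hB : ∀ i j, φ (.inr j) < φ (.inl i) → Bᵀ (i, j) = Pi.single j 1) (i : ι) :
    ((khatriRao A B).toSquareBlock (fun c => min (φ (.inl c.1)) (φ (.inr c.2))) (φ (.inl i))).det =
      (B.submatrix id (i, ·)).det := by
  let S j := φ (.inl i) < φ (.inr j)
  let e : {j // S j} ≃ {c : ι × κ // c.1 = i ∧ S c.2} :=
    { toFun j := ⟨(i, j), rfl, j.2⟩
      invFun c := ⟨c.1.2, c.2.2⟩
      left_inv _ := rfl
      right_inv := by rintro ⟨⟨a, b⟩, rfl, h⟩; rfl }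
  rw [det_eq_det_toSquareBlockProp_of_transpose_eq_single (B.submatrix id (i, ·)) S fun j hj =>
      hB i j ((not_lt.1 hj).lt_of_ne (hφ.ne Sum.inr_ne_inl)),
    toSquareBlock, equiv_block_det _ (q := fun c : ι × κ => c.1 = i ∧ S c.2)
      fun _ => hφ.min_eq_inl_iff.symm, ← det_submatrix_equiv_self e]
  congr 1
  ext ⟨r, hr⟩ ⟨c, hc⟩
  show A i (i, c) * B r (i, c) = B r (i, c)
  rw [← transpose_apply A, hA i c hc, Pi.single_eq_same, one_mul]

theorem det_toSquareBlock_khatriRao_inr (hφ : Injective φ)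
    (hA : ∀ i j, φ (.inl i) < φ (.inr j) → Aᵀ (i, j) = Pi.single i 1)
    (hB : ∀ i j, φ (.inr j) < φ (.inl i) → Bᵀ (i, j) = Pi.single j 1) (j : κ) :
    ((khatriRao A B).toSquareBlock (fun c => min (φ (.inl c.1)) (φ (.inr c.2))) (φ (.inr j))).det =
      (A.submatrix id (·, j)).det := by
  let S i := φ (.inr j) < φ (.inl i)
  let e : {i // S i} ≃ {c : ι × κ // c.2 = j ∧ S c.1} :=
    { toFun i := ⟨(i, j), rfl, i.2⟩
      invFun c := ⟨c.1.1, c.2.2⟩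
      left_inv _ := rfl
      right_inv := by rintro ⟨⟨a, b⟩, rfl, h⟩; rfl }
  rw [det_eq_det_toSquareBlockProp_of_transpose_eq_single (A.submatrix id (·, j)) S fun i hi =>
      hA i j ((not_lt.1 hi).lt_of_ne (hφ.ne Sum.inl_ne_inr)),
    toSquareBlock, equiv_block_det _ (q := fun c : ι × κ => c.2 = j ∧ S c.1)
      fun _ => hφ.min_eq_inr_iff.symm, ← det_submatrix_equiv_self e]
  congr 1
  ext ⟨r, hr⟩ ⟨c, hc⟩
  show A r (c, j) * B j (c, j) = A r (c, j)
  rw [← transpose_apply B, hB c j hc, Pi.single_eq_same, mul_one]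

theorem det_khatriRao_of_interlaced (hφ : Injective φ)
    (hA : ∀ i j, φ (.inl i) < φ (.inr j) → Aᵀ (i, j) = Pi.single i 1)
    (hB : ∀ i j, φ (.inr j) < φ (.inl i) → Bᵀ (i, j) = Pi.single j 1) :
    (khatriRao A B).det =
      (∏ i, (B.submatrix id (i, ·)).det) * ∏ j, (A.submatrix id (·, j)).det := by
  set b := fun c : ι × κ => min (φ (.inl c.1)) (φ (.inr c.2))
  have hsub : univ.image b ⊆ univ.image φ := by
    intro v hv
    obtain ⟨⟨i, j⟩, -, rfl⟩ := mem_image.1 hv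
    rcases min_choice (φ (.inl i)) (φ (.inr j)) with h | h <;>
      simp only [b, h, mem_image_of_mem φ (mem_univ _)]
  have hempty : ∀ v ∈ univ.image φ, v ∉ univ.image b →
      ((khatriRao A B).toSquareBlock b v).det = 1 := by
    intro v _ hv
    have : IsEmpty {c // b c = v} := ⟨fun c => hv (mem_image.2 ⟨c, mem_univ _, c.2⟩)⟩
    exact det_isEmpty
  rw [(blockTriangular_khatriRao hφ hA hB).det, prod_subset hsub hempty, prod_image hφ.injOn,
    Fintype.prod_sum_type]
  simp only [b, det_toSquareBlock_khatriRao_inl hφ hA hB, det_toSquareBlock_khatriRao_inr hφ hA hB]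

end Interlaced

end Matrix

namespace Polynomial

variable {R : Type*} [CommRing R] {N : ℕ}

theorem eval_eq_vandermonde_mulVec_coeff (x : Fin N → R) {F : R[X]}
    (hF : F.degree < N) : (fun k => F.eval (x k)) = vandermonde x *ᵥ fun a => F.coeff a := by
  ext k
  rw [eval_eq_sum, ← sum_fin (fun e a => a * x k ^ e) (fun e => zero_mul _) hF]
  simp only [mulVec, dotProduct, vandermonde_apply, mul_comm]

/-- The coordinates of `F %ₘ nodal univ x` in the family `p`. The inverse is a genuine one only
when `p k` is monic of degree `k`, which makes the coefficient matrix unitriangular. -/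
noncomputable def nodalCoords (p : Fin N → R[X]) (x : Fin N → R) (F : R[X]) : Fin N → R :=
  (of fun a b : Fin N => (p b).coeff a)⁻¹ *ᵥ fun a => (F %ₘ Lagrange.nodal univ x).coeff a

variable {p : Fin N → R[X]}

theorem isUnit_det_matrixOfPolynomials (hp : ∀ k, (p k).Monic ∧ (p k).natDegree = k) :
    IsUnit (of fun a b : Fin N => (p b).coeff a).det := by
  rw [det_matrixOfPolynomials p (fun k => (hp k).2) (fun k => (hp k).1)]
  exact isUnit_one

theorem eval_nodes_eq_mulVec_nodalCoords (hp : ∀ k, (p k).Monic ∧ (p k).natDegree = k)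
    (x : Fin N → R) (F : R[X]) :
    (fun k => F.eval (x k)) = (of fun k a => (p a).eval (x k)) *ᵥ nodalCoords p x F := by
  nontriviality R
  set f := Lagrange.nodal univ x
  have hr : (F %ₘ f).degree < N := by
    simpa [f, Lagrange.degree_nodal] using
      degree_modByMonic_lt F (Lagrange.nodal_monic (s := univ) (v := x))
  calc (fun k => F.eval (x k)) = fun k => (F %ₘ f).eval (x k) := by
        ext k
        conv_lhs => rw [← modByMonic_add_div F f]
        simp [f, Lagrange.eval_nodal_at_node]
    _ = vandermonde x *ᵥ fun a => (F %ₘ f).coeff a := eval_eq_vandermonde_mulVec_coeff x hr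
    _ = _ := by
        rw [eval_matrixOfPolynomials_eq_vandermonde_mul_matrixOfPolynomials x p
          (fun k => (hp k).2.le), nodalCoords, mulVec_mulVec, Matrix.mul_assoc,
          mul_nonsing_inv _ (isUnit_det_matrixOfPolynomials hp), Matrix.mul_one]

theorem nodalCoords_self (hp : ∀ k, (p k).Monic ∧ (p k).natDegree = k) (x : Fin N → R) (i : Fin N) :
    nodalCoords p x (p i) = Pi.single i 1 := by
  nontriviality R
  have hdeg : (p i).degree < (Lagrange.nodal univ x).degree := by
    rw [Lagrange.degree_nodal, degree_eq_natDegree (hp i).1.ne_zero, (hp i).2]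
    simp
  have hcol : (fun a : Fin N => (p i).coeff a) =
      (of fun a b : Fin N => (p b).coeff a) *ᵥ Pi.single i 1 := by
    rw [mulVec_single_one]; rfl
  rw [nodalCoords, (modByMonic_eq_self_iff Lagrange.nodal_monic).2 hdeg, hcol, mulVec_mulVec,
    nonsing_inv_mul _ (isUnit_det_matrixOfPolynomials hp), one_mulVec]

theorem evalMatrix_eq_mul_nodalCoords {ι : Type*} (hp : ∀ k, (p k).Monic ∧ (p k).natDegree = k)
    (x : Fin N → R) (F : ι → R[X]) :
    (of fun k c => (F c).eval (x k)) =
      (of fun k a => (p a).eval (x k)) * of fun a c => nodalCoords p x (F c) a := by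
  ext k c
  exact congrFun (eval_nodes_eq_mulVec_nodalCoords hp x (F c)) k

end Polynomial

theorem stmt6_general (m : ℕ) (P Q : Fin m → Fin (m + 1) → Polynomial ℝ)
    (p : Fin m → Polynomial ℝ) (q : Fin (m + 1) → Polynomial ℝ)
    (hpm : ∀ k : Fin m, (p k).Monic ∧ (p k).natDegree = (k : ℕ))
    (hqm : ∀ k : Fin (m + 1), (q k).Monic ∧ (q k).natDegree = (k : ℕ))
    (hQ : ∀ (i : Fin m) (j : Fin (m + 1)), (j : ℕ) ≤ (i : ℕ) + 1 → Q i j = q j)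
    (hP : ∀ (i : Fin m) (j : Fin (m + 1)), (i : ℕ) + 1 < (j : ℕ) → P i j = p i)
    (x : Fin m → ℝ) (y : Fin (m + 1) → ℝ) :
    ∃ ε : ℝ, (ε = 1 ∨ ε = -1) ∧
      Matrix.det (Matrix.of fun (kl ij : Fin m × Fin (m + 1)) =>
          (P ij.1 ij.2).eval (x kl.1) * (Q ij.1 ij.2).eval (y kl.2)) =
      ε * (∏ j : Fin (m + 1),
              Matrix.det (Matrix.of fun k i : Fin m => (P i j).eval (x k))) *
          (∏ i : Fin m,
              Matrix.det (Matrix.of fun l j : Fin (m + 1) => (Q i j).eval (y l))) := by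
  refine ⟨1, Or.inl rfl, ?_⟩
  set A : Matrix (Fin m) (Fin m × Fin (m + 1)) ℝ := of fun a c => nodalCoords p x (P c.1 c.2) a
  set B : Matrix (Fin (m + 1)) (Fin m × Fin (m + 1)) ℝ :=
    of fun b c => nodalCoords q y (Q c.1 c.2) b
  -- Interleaves the two index sets so that `φ (inl i) < φ (inr j) ↔ i + 1 < j`.
  let φ : Fin m ⊕ Fin (m + 1) → ℕ := Sum.elim (fun i => 2 * i + 3) (fun j => 2 * j)
  have hφ : Injective φ :=
    Injective.sumElim (fun i i' h => Fin.ext (by simpa using h))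
      (fun j j' h => Fin.ext (by simpa using h)) fun i j => by omega
  have hA : ∀ i j, φ (.inl i) < φ (.inr j) → Aᵀ (i, j) = Pi.single i 1 := fun i j h => by
    change nodalCoords p x (P i j) = _
    rw [hP i j (by simp [φ] at h; omega), nodalCoords_self hpm]
  have hB : ∀ i j, φ (.inr j) < φ (.inl i) → Bᵀ (i, j) = Pi.single j 1 := fun i j h => by
    change nodalCoords q y (Q i j) = _
    rw [hQ i j (by simp [φ] at h; omega), nodalCoords_self hqm]
  have hcolP : ∀ j, (of fun k i => (P i j).eval (x k)) =
      (of fun k a => (p a).eval (x k)) * A.submatrix id (·, j) := fun j =>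
    evalMatrix_eq_mul_nodalCoords hpm x fun i => P i j
  have hrowQ : ∀ i, (of fun l j => (Q i j).eval (y l)) =
      (of fun l b => (q b).eval (y l)) * B.submatrix id (i, ·) := fun i =>
    evalMatrix_eq_mul_nodalCoords hqm y fun j => Q i j
  have hgrid : (of fun (kl ij : Fin m × Fin (m + 1)) =>
      (P ij.1 ij.2).eval (x kl.1) * (Q ij.1 ij.2).eval (y kl.2)) =
      ((of fun k a => (p a).eval (x k)) ⊗ₖ (of fun l b => (q b).eval (y l))) * khatriRao A B := by
    rw [kronecker_mul_khatriRao, ← evalMatrix_eq_mul_nodalCoords hpm,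
      ← evalMatrix_eq_mul_nodalCoords hqm]
    rfl
  rw [hgrid, det_mul, det_kronecker, det_khatriRao_of_interlaced hφ hA hB]
  simp only [hcolP, hrowQ, det_mul, prod_mul_distrib, prod_const, card_univ, Fintype.card_fin]
  ring

/-- main factorization, almost square case n = m+1: P, Q are m×(m+1)
polynomial matrices with Q_{i,j} = q_{j-1} for i+1 ≥ j and P_{i,j} = p_{i-1} for i+1 < j
(1-indexed; q_0 = p_0 = 1, q_k, p_k monic of degree k). Then the grid Vandermonde
determinant of P∘Q factors as ± ∏_{j=1}^{m+1} vdm(X, P_{:,j}) · ∏_{i=1}^{m} vdm(Y, Q_{i,:}). -/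
theorem stmt6 (m : ℕ) (P Q : Fin m → Fin (m + 1) → Polynomial ℝ)
    (p : Fin m → Polynomial ℝ) (q : Fin (m + 1) → Polynomial ℝ)
    (hp0 : ∀ h : 0 < m, p ⟨0, h⟩ = 1) (hq0 : q 0 = 1)
    (hpm : ∀ k : Fin m, (p k).Monic ∧ (p k).natDegree = (k : ℕ))
    (hqm : ∀ k : Fin (m + 1), (q k).Monic ∧ (q k).natDegree = (k : ℕ))
    (hQ : ∀ (i : Fin m) (j : Fin (m + 1)), (j : ℕ) ≤ (i : ℕ) + 1 → Q i j = q j)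
    (hP : ∀ (i : Fin m) (j : Fin (m + 1)), (i : ℕ) + 1 < (j : ℕ) → P i j = p i)
    (x : Fin m → ℝ) (y : Fin (m + 1) → ℝ) :
    ∃ ε : ℝ, (ε = 1 ∨ ε = -1) ∧
      Matrix.det (Matrix.of fun (kl ij : Fin m × Fin (m + 1)) =>
          (P ij.1 ij.2).eval (x kl.1) * (Q ij.1 ij.2).eval (y kl.2)) =
      ε * (∏ j : Fin (m + 1),
              Matrix.det (Matrix.of fun k i : Fin m => (P i j).eval (x k))) *
          (∏ i : Fin m,
              Matrix.det (Matrix.of fun l j : Fin (m + 1) => (Q i j).eval (y l))) :=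
  stmt6_general m P Q p q hpm hqm hQ hP x y
end

section
/- Let a(x) be a monic polynomial of degree m+1, let x1, ..., xm be distinct points, and for 1 ≤ j ≤ m+1 define the family of m polynomials P^{(j)} = {1, x, ..., x^{j−2}, a(x), x·a(x), ..., x^{m−j}·a(x)}. Then for 2 ≤ j < (m−1)/2, the determinant det[P^{(j)}_i(x_k)]_{k,i=1}^m equals ± (∏_{i=1}^{j−1} ∏_{k=i+1}^{m} (x_i − x_k)) · det[R_i(x_k)]_{k=j..m, i}, where R is the family of m−j+1 polynomials {ã^{(j−1)}(x), ..., ã^{(1)}(x), a(x), x·a(x), ..., x^{m−2j+1}·a(x)} and ã^{(ℓ)} denotes the ℓ-fold iterated divided difference of a at x1, ..., xℓ. -/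
open Polynomial

/-- The divided difference (f(x) − f(x0))/(x − x0) of a polynomial f at a point x0. -/
noncomputable def divDiff (x0 : ℝ) (f : Polynomial ℝ) : Polynomial ℝ :=
  (f - C (f.eval x0)) /ₘ (X - C x0)

/-- The ℓ-fold iterated divided difference of a at x 0, x 1, ..., x (ℓ-1). -/
noncomputable def iterDD (x : ℕ → ℝ) (a : Polynomial ℝ) : ℕ → Polynomial ℝ
  | 0 => a
  | k + 1 => divDiff (x k) (iterDD x a k)

/-! With `W = ∏_{t<p} (X - x_t)` and `p = j - 1`, Newton interpolation writes
`a = r + ∏_{t<ℓ} (X - x_t) · ã^{(ℓ)}` with `deg r < ℓ`, so every `W · R_c` is `S · a - r'` with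
`S` monic of degree `c` and `deg r' < p`. Replacing the columns `X^c · a` of `P^{(j)}` by `W · R_c`
is therefore a unitriangular column operation. In the new matrix the first `p` rows vanish outside
the first `p` columns because `W(x_t) = 0`, so the determinant splits into a Vandermonde determinant
on `x_0, …, x_{p-1}` times `∏_k W(x_{p+k}) · det R`, and these two factors combine to the double
product up to the sign of reversing each difference. -/

open Finset Lagrange

namespace Matrix

variable {R ι : Type*} [CommRing R] [Fintype ι] [LinearOrder ι]

theorem det_of_cols_eq_of_sub_mem_span {u v : ι → ι → R}
    (h : ∀ i, v i - u i ∈ Submodule.span R (u '' Set.Iio i)) :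
    (of fun r i => v i r).det = (of fun r i => u i r).det := by
  choose l hl hlu using fun i => (Finsupp.mem_span_image_iff_linearCombination R).1 (h i)
  have hl0 : ∀ i k, ¬k < i → l i k = 0 := fun i k hk =>
    (Finsupp.mem_supported' R (l i)).1 (hl i) k hk
  set T : Matrix ι ι R := 1 + of fun k i => l i k
  have hT : T.IsUpperTriangular := fun k i (hik : i < k) => by
    simp [T, one_apply_ne hik.ne', hl0 i k (lt_asymm hik)]
  have hvuT : of (fun r i => v i r) = of (fun r i => u i r) * T := by
    rw [Matrix.mul_add, Matrix.mul_one]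
    ext r i
    have hcol := congrFun (hlu i) r
    rw [Finsupp.linearCombination_apply, Finsupp.sum_fintype _ _ (by simp)] at hcol
    simp only [Finset.sum_apply, Pi.smul_apply, Pi.sub_apply, smul_eq_mul] at hcol
    simp only [add_apply, mul_apply, of_apply, mul_comm (u _ r)] at hcol ⊢
    linear_combination -hcol
  rw [hvuT, det_mul, det_of_isUpperTriangular hT, Finset.prod_eq_one, mul_one]
  intro i _
  simp [T, hl0 i i (lt_irrefl i)]

theorem det_fin_add_of_upper_right_eq_zero {p q : ℕ} (M : Matrix (Fin (p + q)) (Fin (p + q)) R)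
    (h : ∀ i c, M (Fin.castAdd q i) (Fin.natAdd p c) = 0) :
    M.det = (of fun i j => M (Fin.castAdd q i) (Fin.castAdd q j)).det *
      (of fun k c => M (Fin.natAdd p k) (Fin.natAdd p c)).det := by
  have h₁₂ : (M.submatrix finSumFinEquiv finSumFinEquiv).toBlocks₁₂ = 0 := by
    ext i c
    exact h i c
  rw [← det_submatrix_equiv_self finSumFinEquiv M, ← fromBlocks_toBlocks (M.submatrix _ _), h₁₂,
    det_fromBlocks_zero₁₂]
  rfl

end Matrix

namespace Polynomial

variable {R : Type*} [CommRing R]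

theorem det_eval_eq_of_sub_mem_span {n : ℕ} {f g : ℕ → R[X]} (v : ℕ → R)
    (h : ∀ i < n, g i - f i ∈ Submodule.span R (f '' Set.Iio i)) :
    (Matrix.of fun k i : Fin n => (g i).eval (v k)).det =
      (Matrix.of fun k i : Fin n => (f i).eval (v k)).det := by
  let ev : R[X] →ₗ[R] Fin n → R := LinearMap.pi fun k => leval (v k)
  refine Matrix.det_of_cols_eq_of_sub_mem_span (u := fun i => ev (f i)) (v := fun i => ev (g i))
    fun i => ?_
  rw [← map_sub]
  refine Submodule.span_mono ?_ (Submodule.apply_mem_span_image_of_mem_span ev (h i i.isLt))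
  rintro _ ⟨_, ⟨k, hk, rfl⟩, rfl⟩
  exact ⟨⟨k, lt_trans hk i.isLt⟩, hk, rfl⟩

theorem Monic.sub_X_pow_natDegree_mem_degreeLT {S : R[X]} (hS : S.Monic) :
    S - X ^ S.natDegree ∈ degreeLT R S.natDegree := by
  rw [mem_degreeLT, degree_lt_iff_coeff_zero]
  intro n hn
  rw [coeff_sub, coeff_X_pow]
  rcases hn.eq_or_lt with rfl | hlt
  · simp [hS.coeff_natDegree]
  · simp [coeff_eq_zero_of_natDegree_lt hlt, hlt.ne']

end Polynomial

theorem X_sub_C_mul_divDiff (t : ℝ) (f : ℝ[X]) : (X - C t) * divDiff t f = f - C (f.eval t) := by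
  rw [divDiff, mul_divByMonic_eq_iff_isRoot]
  simp

-- `a - nodal (range ℓ) x * iterDD x a ℓ` is the interpolating polynomial `p(x; x_1, …, x_ℓ)`.
theorem sub_nodal_mul_iterDD_mem_degreeLT (x : ℕ → ℝ) (a : ℝ[X]) (ℓ : ℕ) :
    a - nodal (range ℓ) x * iterDD x a ℓ ∈ degreeLT ℝ ℓ := by
  induction ℓ with
  | zero => simp [iterDD, nodal]
  | succ ℓ ih =>
    have hstep : a - nodal (range (ℓ + 1)) x * iterDD x a (ℓ + 1) =
        (a - nodal (range ℓ) x * iterDD x a ℓ) +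
          (iterDD x a ℓ).eval (x ℓ) • nodal (range ℓ) x := by
      rw [nodal, prod_range_succ, ← nodal, iterDD, mul_assoc, X_sub_C_mul_divDiff, smul_eq_C_mul]
      ring
    rw [hstep]
    refine add_mem (degreeLT_mono ℓ.le_succ ih) (Submodule.smul_mem _ _ ?_)
    rw [mem_degreeLT, degree_nodal, card_range]
    exact_mod_cast ℓ.lt_succ_self

-- `familyP a p` and `familyR x a p` are the paper's families `P^{(j)}` and `R` for `j = p + 1`.
noncomputable def familyP {R : Type*} [Semiring R] (a : R[X]) (p i : ℕ) : R[X] :=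
  if i < p then X ^ i else X ^ (i - p) * a

noncomputable def familyR (x : ℕ → ℝ) (a : ℝ[X]) (p c : ℕ) : ℝ[X] :=
  if c < p then iterDD x a (p - c) else X ^ (c - p) * a

theorem exists_nodal_mul_familyR_eq (x : ℕ → ℝ) (a : ℝ[X]) (p c : ℕ) :
    ∃ S r : ℝ[X], S.Monic ∧ S.natDegree = c ∧ r ∈ degreeLT ℝ p ∧
      nodal (range p) x * familyR x a p c = S * a - r := by
  unfold familyR
  split_ifs with hc
  · set S := nodal (Ico (p - c) p) x
    have hSc : S.natDegree = c := by rw [natDegree_nodal, Nat.card_Ico]; omega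
    have hr := sub_nodal_mul_iterDD_mem_degreeLT x a (p - c)
    refine ⟨S, S * (a - nodal (range (p - c)) x * iterDD x a (p - c)), nodal_monic, hSc, ?_, ?_⟩
    · rcases eq_or_ne (a - nodal (range (p - c)) x * iterDD x a (p - c)) 0 with h0 | h0
      · rw [h0, mul_zero]
        exact zero_mem _
      rw [mem_degreeLT, degree_eq_natDegree h0, Nat.cast_lt] at hr
      rw [mem_degreeLT, degree_mul, degree_eq_natDegree nodal_monic.ne_zero,
        degree_eq_natDegree h0, hSc]
      norm_cast
      omega
    · rw [nodal, ← prod_range_mul_prod_Ico _ (Nat.sub_le p c), ← nodal, ← nodal]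
      ring
  · refine ⟨X ^ (c - p) * nodal (range p) x, 0, (monic_X_pow _).mul nodal_monic, ?_,
      zero_mem _, by ring⟩
    rw [(monic_X_pow _).natDegree_mul nodal_monic, natDegree_X_pow, natDegree_nodal, card_range]
    omega

theorem nodal_mul_familyR_sub_familyP_mem_span (x : ℕ → ℝ) (a : ℝ[X]) (p c : ℕ) :
    nodal (range p) x * familyR x a p c - familyP a p (p + c) ∈
      Submodule.span ℝ (familyP a p '' Set.Iio (p + c)) := by
  classical
  obtain ⟨S, r, hS, hSc, hr, hWR⟩ := exists_nodal_mul_familyR_eq x a p c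
  have hP : familyP a p (p + c) = X ^ c * a := by simp [familyP]
  have hlow : degreeLT ℝ p ≤ Submodule.span ℝ (familyP a p '' Set.Iio (p + c)) := by
    rw [degreeLT_eq_span_X_pow]
    refine Submodule.span_mono ?_
    rw [coe_image, coe_range]
    rintro _ ⟨k, hk, rfl⟩
    rw [Set.mem_Iio] at hk
    exact ⟨k, by simp; omega, if_pos hk⟩
  have hhigh : (S - X ^ c) * a ∈ Submodule.span ℝ (familyP a p '' Set.Iio (p + c)) := by
    have hSX := hS.sub_X_pow_natDegree_mem_degreeLT
    rw [hSc, degreeLT_eq_span_X_pow] at hSX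
    refine Submodule.span_mono ?_ (Submodule.apply_mem_span_image_of_mem_span
      (LinearMap.mulRight ℝ a) hSX)
    rw [coe_image, coe_range]
    rintro _ ⟨_, ⟨e, he, rfl⟩, rfl⟩
    rw [Set.mem_Iio] at he
    exact ⟨p + e, by simp; omega, by simp [familyP]⟩
  rw [hWR, hP, show S * a - r - X ^ c * a = (S - X ^ c) * a - r by ring]
  exact sub_mem hhigh (hlow hr)

theorem det_eval_familyP (x : ℕ → ℝ) (a : ℝ[X]) (p q : ℕ) :
    (Matrix.of fun k i : Fin (p + q) => (familyP a p i).eval (x k)).det =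
      (Matrix.vandermonde fun i : Fin p => x i).det *
        (∏ k : Fin q, (nodal (range p) x).eval (x (p + k))) *
        (Matrix.of fun k c : Fin q => (familyR x a p c).eval (x (p + k))).det := by
  set W := nodal (range p) x
  set g : ℕ → ℝ[X] := fun i => if i < p then X ^ i else W * familyR x a p (i - p)
  have hg : ∀ i < p + q, g i - familyP a p i ∈ Submodule.span ℝ (familyP a p '' Set.Iio i) := by
    intro i _
    by_cases hi : i < p
    · simp [g, familyP, hi]
    · obtain ⟨c, rfl⟩ := Nat.exists_eq_add_of_le (not_lt.1 hi)
      simpa [g] using nodal_mul_familyR_sub_familyP_mem_span x a p c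
  rw [← det_eval_eq_of_sub_mem_span x hg, Matrix.det_fin_add_of_upper_right_eq_zero, mul_assoc,
    ← Matrix.det_mul_column]
  · congr 2
    · ext k i
      simp [g, Matrix.vandermonde_apply]
    · ext k c
      simp [g]
  · intro i c
    simp [g, W, eval_nodal_at_node]

theorem det_vandermonde_mul_prod_eval_nodal (x : ℕ → ℝ) (p q : ℕ) :
    (Matrix.vandermonde fun i : Fin p => x i).det *
        ∏ k : Fin q, (nodal (range p) x).eval (x (p + k)) =
      ∏ i ∈ range p, ∏ k ∈ Ico (i + 1) (p + q), (x k - x i) := by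
  have hV : (Matrix.vandermonde fun i : Fin p => x i).det =
      ∏ i ∈ range p, ∏ k ∈ Ico (i + 1) p, (x k - x i) := by
    rw [Matrix.det_vandermonde, ← Fin.prod_univ_eq_prod_range]
    refine prod_congr rfl fun i _ => ?_
    rw [Ico_add_one_left_eq_Ioo, ← Fin.map_valEmbedding_Ioi, prod_map]
    rfl
  have hW : ∏ k : Fin q, (nodal (range p) x).eval (x (p + k)) =
      ∏ i ∈ range p, ∏ k ∈ Ico p (p + q), (x k - x i) := by
    simp_rw [eval_nodal, prod_Ico_eq_prod_range, Nat.add_sub_cancel_left]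
    rw [Fin.prod_univ_eq_prod_range (fun k => ∏ i ∈ range p, (x (p + k) - x i)), prod_comm]
  rw [hV, hW, ← prod_mul_distrib]
  refine prod_congr rfl fun i hi => prod_Ico_consecutive _ ?_ (Nat.le_add_right p q)
  rw [mem_range] at hi
  omega

theorem stmt9_general (m j : ℕ) (hj2 : 2 ≤ j) (hjm : 2 * j < m - 1)
    (a : Polynomial ℝ) (x : ℕ → ℝ) :
    ∃ ε : ℝ, (ε = 1 ∨ ε = -1) ∧
      Matrix.det (Matrix.of fun k i : Fin m =>
          (if (i : ℕ) < j - 1 then X ^ (i : ℕ) else X ^ ((i : ℕ) - (j - 1)) * a).eval (x k)) =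
      ε * (∏ i ∈ Finset.range (j - 1), ∏ k ∈ Finset.Ico (i + 1) m, (x i - x k)) *
        Matrix.det (Matrix.of fun k i : Fin (m - j + 1) =>
          (if (i : ℕ) < j - 1 then iterDD x a (j - 1 - (i : ℕ))
           else X ^ ((i : ℕ) - (j - 1)) * a).eval (x (j - 1 + (k : ℕ)))) := by
  obtain ⟨p, rfl⟩ : ∃ p, j = p + 1 := ⟨j - 1, by omega⟩
  obtain ⟨q, rfl⟩ : ∃ q, m = p + q := ⟨m - p, by omega⟩
  rw [Nat.add_sub_cancel, show p + q - (p + 1) + 1 = q by omega]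
  set n := ∑ i ∈ range p, #(Ico (i + 1) (p + q))
  have hswap : ∏ i ∈ range p, ∏ k ∈ Ico (i + 1) (p + q), (x i - x k) =
      (-1) ^ n * ∏ i ∈ range p, ∏ k ∈ Ico (i + 1) (p + q), (x k - x i) := by
    rw [← prod_pow_eq_pow_sum, ← prod_mul_distrib]
    refine prod_congr rfl fun i _ => ?_
    rw [← prod_neg]
    simp
  refine ⟨(-1) ^ n, neg_one_pow_eq_or ℝ n, ?_⟩
  rw [hswap, ← det_vandermonde_mul_prod_eval_nodal, ← mul_assoc, ← pow_add,
    Even.neg_one_pow ⟨n, rfl⟩, one_mul]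
  exact det_eval_familyP x a p q

/-- for a monic of degree m+1, distinct points x1, ..., xm (0-indexed here as
x 0, ..., x (m-1)) and 2 ≤ j < (m−1)/2, the Vandermonde determinant of the family
P^{(j)} = {1, x, ..., x^{j−2}, a, x·a, ..., x^{m−j}·a} at x1, ..., xm equals
± (∏_{i=1}^{j−1} ∏_{k=i+1}^{m} (x_i − x_k)) times the Vandermonde determinant of
R = {ã^{(j−1)}, ..., ã^{(1)}, a, x·a, ..., x^{m−2j+1}·a} at x_j, ..., x_m. -/
theorem stmt9 (m j : ℕ) (hj2 : 2 ≤ j) (hjm : 2 * j < m - 1)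
    (a : Polynomial ℝ) (ha : a.Monic) (hdeg : a.natDegree = m + 1)
    (x : ℕ → ℝ) (hx : ∀ i < m, ∀ k < m, x i = x k → i = k) :
    ∃ ε : ℝ, (ε = 1 ∨ ε = -1) ∧
      Matrix.det (Matrix.of fun k i : Fin m =>
          (if (i : ℕ) < j - 1 then X ^ (i : ℕ) else X ^ ((i : ℕ) - (j - 1)) * a).eval (x k)) =
      ε * (∏ i ∈ Finset.range (j - 1), ∏ k ∈ Finset.Ico (i + 1) m, (x i - x k)) *
        Matrix.det (Matrix.of fun k i : Fin (m - j + 1) =>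
          (if (i : ℕ) < j - 1 then iterDD x a (j - 1 - (i : ℕ))
           else X ^ ((i : ℕ) - (j - 1)) * a).eval (x (j - 1 + (k : ℕ)))) :=
  stmt9_general m j hj2 hjm a x
end

section
/- (Splitting of the Padua-like Vandermonde determinant) Let n be even, let x1, ..., x_{n+1} and y1, ..., y_{n+2} be distinct points, and let A_n = A_n^o ∪ A_n^e be the Padua-like points, where A_n^o = {(x_{2i+1}, y_{2j+1}) : 0 ≤ i, j ≤ n/2} and A_n^e = {(x_{2i}, y_{2j}) : 1 ≤ i ≤ n/2, 1 ≤ j ≤ n/2+1}. Let T_{n/2} = {x^α y^β : 0 ≤ α, β ≤ n/2} and T^e_{n/2} = a(x)·B_{n/2−1} ∪ b(y)·B_{n/2−1}, where a(x) = ∏_{i=0}^{n/2}(x − x_{2i+1}), b(y) = ∏_{j=0}^{n/2}(y − y_{2j+1}), and B_k is the set of monomials of total degree ≤ k. Then vdm(A_n, T_{n/2} ∪ T^e_{n/2}) = ± vdm(A_n^o, T_{n/2}) · vdm(A_n^e, T^e_{n/2}). -/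
/-- a(u) = ∏_{i=0}^{m} (u − x_{2i+1}), the annihilating polynomial of the odd-indexed
points (as a real function); the points x are 1-indexed via x : ℕ → ℝ. -/
def annih (m : ℕ) (x : ℕ → ℝ) (u : ℝ) : ℝ :=
  ∏ i ∈ Finset.range (m + 1), (u - x (2 * i + 1))

/-- Index type for T^e_{m} = a(x)·B_{m−1} ∪ b(y)·B_{m−1}: a tag (true for the a-copy,
false for the b-copy) and a monomial exponent pair (α, β) with α + β ≤ m − 1. -/
def TeIdx (m : ℕ) := Bool × {pq : ℕ × ℕ // pq.1 + pq.2 + 1 ≤ m}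

/-- The element of T^e_{m} with index c, as a function of (u, v):
a(u)·u^α·v^β or b(v)·u^α·v^β. -/
def TePoly (m : ℕ) (x y : ℕ → ℝ) (c : TeIdx m) (u v : ℝ) : ℝ :=
  (if c.1 then annih m x u else annih m y v) * u ^ c.2.1.1 * v ^ c.2.1.2

/-!
The polynomials of `T^e_{n/2}` vanish on the odd grid `A_n^o`, since `a` vanishes at every
`x_{2i+1}` and `b` at every `y_{2j+1}`. Ordering the points as `A_n^o` then `A_n^e` and the
polynomials as `T_{n/2}` then `T^e_{n/2}`, the collocation matrix is therefore block lower
triangular, and its determinant is the product of the two diagonal blocks.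
-/

theorem Matrix.det_eq_det_toBlocks_mul_of_toBlocks₁₂_eq_zero {m n R : Type*}
    [Fintype m] [Fintype n] [DecidableEq m] [DecidableEq n] [CommRing R]
    (M : Matrix (m ⊕ n) (m ⊕ n) R) (h : M.toBlocks₁₂ = 0) :
    M.det = M.toBlocks₁₁.det * M.toBlocks₂₂.det := by
  conv_lhs => rw [← M.fromBlocks_toBlocks, h]
  exact Matrix.det_fromBlocks_zero₁₂ _ _ _

theorem annih_apply_odd (m : ℕ) (x : ℕ → ℝ) {i : ℕ} (hi : i ≤ m) :
    annih m x (x (2 * i + 1)) = 0 :=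
  Finset.prod_eq_zero (Finset.mem_range.2 (Nat.lt_succ_of_le hi)) (sub_self _)

theorem TePoly_apply_odd (m : ℕ) (x y : ℕ → ℝ) (c : TeIdx m) {i j : ℕ} (hi : i ≤ m)
    (hj : j ≤ m) : TePoly m x y c (x (2 * i + 1)) (y (2 * j + 1)) = 0 := by
  unfold TePoly
  split_ifs
  · rw [annih_apply_odd m x hi, zero_mul, zero_mul]
  · rw [annih_apply_odd m y hj, zero_mul, zero_mul]

theorem stmt11_general (m : ℕ) (x y : ℕ → ℝ)
    (e : Fin m × Fin (m + 1) ≃ TeIdx m) :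
    ∃ ε : ℝ, (ε = 1 ∨ ε = -1) ∧
      Matrix.det (Matrix.of
        fun (r c : (Fin (m + 1) × Fin (m + 1)) ⊕ (Fin m × Fin (m + 1))) =>
          Sum.elim
            (fun (ab : Fin (m + 1) × Fin (m + 1)) (u v : ℝ) =>
              u ^ (ab.1 : ℕ) * v ^ (ab.2 : ℕ))
            (fun kl => TePoly m x y (e kl)) c
            (Sum.elim (fun ij => x (2 * (ij.1 : ℕ) + 1))
              (fun ij => x (2 * (ij.1 : ℕ) + 2)) r)
            (Sum.elim (fun ij => y (2 * (ij.2 : ℕ) + 1))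
              (fun ij => y (2 * (ij.2 : ℕ) + 2)) r)) =
      ε * Matrix.det (Matrix.of fun (r c : Fin (m + 1) × Fin (m + 1)) =>
              (x (2 * (r.1 : ℕ) + 1)) ^ (c.1 : ℕ) * (y (2 * (r.2 : ℕ) + 1)) ^ (c.2 : ℕ)) *
          Matrix.det (Matrix.of fun (r c : Fin m × Fin (m + 1)) =>
              TePoly m x y (e c) (x (2 * (r.1 : ℕ) + 2)) (y (2 * (r.2 : ℕ) + 2))) := by
  refine ⟨1, Or.inl rfl, ?_⟩
  rw [one_mul, Matrix.det_eq_det_toBlocks_mul_of_toBlocks₁₂_eq_zero]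
  · rfl
  · ext ij kl
    exact TePoly_apply_odd m x y (e kl) ij.1.is_le ij.2.is_le

/-- splitting of the Padua-like Vandermonde determinant: with n = 2m even,
distinct x's and y's, A_n^o = {(x_{2i+1}, y_{2j+1})}, A_n^e = {(x_{2i}, y_{2j})},
T_m the square monomials and T^e_m as above (enumerated by a bijection e),
vdm(A_n, T_m ∪ T^e_m) = ± vdm(A_n^o, T_m) · vdm(A_n^e, T^e_m). -/
theorem stmt11 (m : ℕ) (x y : ℕ → ℝ)
    (hx : Set.InjOn x (Set.Icc 1 (2 * m + 1)))
    (hy : Set.InjOn y (Set.Icc 1 (2 * m + 2)))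
    (e : Fin m × Fin (m + 1) ≃ TeIdx m) :
    ∃ ε : ℝ, (ε = 1 ∨ ε = -1) ∧
      Matrix.det (Matrix.of
        fun (r c : (Fin (m + 1) × Fin (m + 1)) ⊕ (Fin m × Fin (m + 1))) =>
          Sum.elim
            (fun (ab : Fin (m + 1) × Fin (m + 1)) (u v : ℝ) =>
              u ^ (ab.1 : ℕ) * v ^ (ab.2 : ℕ))
            (fun kl => TePoly m x y (e kl)) c
            (Sum.elim (fun ij => x (2 * (ij.1 : ℕ) + 1))
              (fun ij => x (2 * (ij.1 : ℕ) + 2)) r)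
            (Sum.elim (fun ij => y (2 * (ij.2 : ℕ) + 1))
              (fun ij => y (2 * (ij.2 : ℕ) + 2)) r)) =
      ε * Matrix.det (Matrix.of fun (r c : Fin (m + 1) × Fin (m + 1)) =>
              (x (2 * (r.1 : ℕ) + 1)) ^ (c.1 : ℕ) * (y (2 * (r.2 : ℕ) + 1)) ^ (c.2 : ℕ)) *
          Matrix.det (Matrix.of fun (r c : Fin m × Fin (m + 1)) =>
              TePoly m x y (e c) (x (2 * (r.1 : ℕ) + 2)) (y (2 * (r.2 : ℕ) + 2))) :=
  stmt11_general m x y e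
end

section
/- (Corollary: Padua-like even-grid determinant factorization) Let n be even, m = n/2, X = {x_{2i} : 1 ≤ i ≤ m}, Y = {y_{2j} : 1 ≤ j ≤ m+1}, a(x) = ∏_{i=0}^{m}(x − x_{2i+1}), b(y) = ∏_{j=0}^{m}(y − y_{2j+1}), where all x's are distinct and all y's are distinct. Define the m(m+1) bivariate polynomials given by the entries of P∘Q, where the j-th column of P (1 ≤ j ≤ m+1) is [1, x, ..., x^{j−2}, a(x), x·a(x), ..., x^{m−j}·a(x)]^T, i.e. P_{i,j}(x) = x^{i−1} for i < j and x^{i−j}a(x) for i ≥ j, and the i-th row of Q (1 ≤ i ≤ m) is [1, y, ..., y^{i−1}, b(y), y·b(y), ..., y^{m−i}·b(y)]. Then the Vandermonde determinant of these m(m+1) polynomials at the m(m+1) grid points X×Y equals ± (∏_{j=1}^{m+1} det[P_{i,j}(x_k)]_{k,i=1}^m) · (∏_{i=1}^{m} det[Q_{i,j}(y_l)]_{l,j=1}^{m+1}). -/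
open Polynomial

/-- The Padua matrix P (see the paper): P i j = x^i for i < j, x^{i−j}·a for i ≥ j
(0-indexed). -/
noncomputable def Pmat (m : ℕ) (a : Polynomial ℝ) :
    Fin m → Fin (m + 1) → Polynomial ℝ := fun i j =>
  if (i : ℕ) < (j : ℕ) then X ^ (i : ℕ) else X ^ ((i : ℕ) - (j : ℕ)) * a

/-- The Padua matrix Q: Q i j = y^j for j ≤ i, y^{j−i−1}·b for j > i (0-indexed). -/
noncomputable def Qmat (m : ℕ) (b : Polynomial ℝ) :
    Fin m → Fin (m + 1) → Polynomial ℝ := fun i j =>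
  if (j : ℕ) ≤ (i : ℕ) then X ^ (j : ℕ) else X ^ ((j : ℕ) - (i : ℕ) - 1) * b

def IsPM1 (e : ℝ) : Prop := e = 1 ∨ e = -1

lemma IsPM1.one : IsPM1 1 := Or.inl rfl

lemma IsPM1.mul {a b : ℝ} (ha : IsPM1 a) (hb : IsPM1 b) : IsPM1 (a * b) := by
  rcases ha with h | h <;> rcases hb with h' | h' <;> subst h <;> subst h' <;> simp [IsPM1]

lemma IsPM1.sq {a : ℝ} (ha : IsPM1 a) : a * a = 1 := by
  rcases ha with h | h <;> subst h <;> norm_num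

lemma det_submatrix_pm {I J : Type*} [Fintype I] [DecidableEq I] [Fintype J] [DecidableEq J]
    (M : Matrix J J ℝ) (e f : I ≃ J) :
    ∃ ε : ℝ, IsPM1 ε ∧ (M.submatrix e f).det = ε * M.det := by
  set σ : Equiv.Perm I := e.trans f.symm with hσ
  have h1 : M.submatrix e f = (M.submatrix f f).submatrix (σ : I → I) id := by
    ext i j
    simp [Matrix.submatrix_apply, hσ]
  rw [h1, Matrix.det_permute, Matrix.det_submatrix_equiv_self]
  refine ⟨((Equiv.Perm.sign σ : ℤ) : ℝ), ?_, by push_cast; ring⟩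
  rcases Int.units_eq_one_or (Equiv.Perm.sign σ) with h | h <;> rw [h] <;> simp [IsPM1]

set_option maxRecDepth 8000

/-- Core elimination step: pivot on the second index. -/
lemma step {α : Type*} [Fintype α] [DecidableEq α] (b : ℕ)
    (F : α → α → Fin (b + 1) → ℝ) (G : Fin (b + 1) → α → Fin (b + 1) → ℝ)
    (v : Fin (b + 1) → ℝ) (hG : ∀ s c, G s c 0 = v s)
    (t : Fin (b + 1)) (hv : v t ≠ 0) :
    ∃ ε : ℝ, IsPM1 ε ∧
      Matrix.det (Matrix.of fun rs cd : α × Fin (b + 1) =>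
          F rs.1 cd.1 cd.2 * G rs.2 cd.1 cd.2)
        = ε * (v t ^ Fintype.card α * Matrix.det (Matrix.of fun r c : α => F r c 0)
            * Matrix.det (Matrix.of fun rs cd : α × Fin b =>
                F rs.1 cd.1 cd.2.succ *
                  (G (t.succAbove rs.2) cd.1 cd.2.succ -
                    v (t.succAbove rs.2) / v t * G t cd.1 cd.2.succ))) := by
  classical
  set M : Matrix (α × Fin (b + 1)) (α × Fin (b + 1)) ℝ :=
    Matrix.of fun rs cd => F rs.1 cd.1 cd.2 * G rs.2 cd.1 cd.2 with hM
  -- equivalences splitting off the pivot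
  set E1 : α × Fin (b + 1) ≃ (α × Fin b) ⊕ α :=
    (Equiv.prodCongr (Equiv.refl α) ((finSuccEquiv' t).trans (Equiv.optionEquivSumPUnit _))).trans
      ((Equiv.prodSumDistrib α (Fin b) Unit).trans
        (Equiv.sumCongr (Equiv.refl _) (Equiv.prodPUnit α))) with hE1def
  set E2 : α × Fin (b + 1) ≃ (α × Fin b) ⊕ α :=
    (Equiv.prodCongr (Equiv.refl α) ((finSuccEquiv' 0).trans (Equiv.optionEquivSumPUnit _))).trans
      ((Equiv.prodSumDistrib α (Fin b) Unit).trans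
        (Equiv.sumCongr (Equiv.refl _) (Equiv.prodPUnit α))) with hE2def
  have hE1l : ∀ (r : α) (s : Fin b), E1.symm (Sum.inl (r, s)) = (r, t.succAbove s) := by
    intro r s
    rw [Equiv.symm_apply_eq]
    rw [hE1def]; simp
  have hE1r : ∀ r : α, E1.symm (Sum.inr r) = (r, t) := by
    intro r
    rw [Equiv.symm_apply_eq]
    rw [hE1def]; simp
  have hE2l : ∀ (r : α) (s : Fin b), E2.symm (Sum.inl (r, s)) = (r, s.succ) := by
    intro r s
    rw [Equiv.symm_apply_eq]
    have h0 : (0 : Fin (b + 1)).succAbove s = s.succ := by simp [Fin.succAbove_zero]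
    have h1 : finSuccEquiv' (0 : Fin (b + 1)) s.succ = some s := by
      rw [← h0, finSuccEquiv'_succAbove]
    rw [hE2def]
    simp [h1]
  have hE2r : ∀ r : α, E2.symm (Sum.inr r) = (r, 0) := by
    intro r
    rw [Equiv.symm_apply_eq]
    rw [hE2def]; simp
  obtain ⟨ε₀, hε₀, hdet0⟩ := det_submatrix_pm M E1.symm E2.symm
  set Mh := M.submatrix E1.symm E2.symm with hMh
  -- elimination matrix
  set N : Matrix (α × Fin b) α ℝ :=
    Matrix.of fun rs r' => if rs.1 = r' then -(v (t.succAbove rs.2) / v t) else 0 with hN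
  set Dm : Matrix (α × Fin b) (α × Fin b) ℝ :=
    Matrix.of fun rs cd =>
      F rs.1 cd.1 cd.2.succ *
        (G (t.succAbove rs.2) cd.1 cd.2.succ -
          v (t.succAbove rs.2) / v t * G t cd.1 cd.2.succ) with hDm
  set Cm : Matrix α (α × Fin b) ℝ :=
    Matrix.of fun r cd => F r cd.1 cd.2.succ * G t cd.1 cd.2.succ with hCm
  set Bm : Matrix α α ℝ := Matrix.of fun r c => F r c 0 * v t with hBm
  have hMhll : ∀ (r : α) (s : Fin b) (c : α) (d : Fin b),
      Mh (Sum.inl (r, s)) (Sum.inl (c, d)) = F r c d.succ * G (t.succAbove s) c d.succ := by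
    intro r s c d
    rw [hMh]
    simp [Matrix.submatrix_apply, hE1l, hE2l, hM]
  have hMhlr : ∀ (r : α) (s : Fin b) (c : α),
      Mh (Sum.inl (r, s)) (Sum.inr c) = F r c 0 * v (t.succAbove s) := by
    intro r s c
    rw [hMh]
    simp [Matrix.submatrix_apply, hE1l, hE2r, hM, hG]
  have hMhrl : ∀ (r : α) (c : α) (d : Fin b),
      Mh (Sum.inr r) (Sum.inl (c, d)) = F r c d.succ * G t c d.succ := by
    intro r c d
    rw [hMh]
    simp [Matrix.submatrix_apply, hE1r, hE2l, hM]
  have hMhrr : ∀ (r : α) (c : α), Mh (Sum.inr r) (Sum.inr c) = F r c 0 * v t := by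
    intro r c
    rw [hMh]
    simp [Matrix.submatrix_apply, hE1r, hE2r, hM, hG]
  have mulapp : ∀ (x : (α × Fin b) ⊕ α) (y : (α × Fin b) ⊕ α),
      ((Matrix.fromBlocks (1 : Matrix (α × Fin b) (α × Fin b) ℝ) N 0 (1 : Matrix α α ℝ)) * Mh) x y =
        Sum.elim (fun a : α × Fin b => Mh (Sum.inl a) y - v (t.succAbove a.2) / v t * Mh (Sum.inr a.1) y)
          (fun a : α => Mh (Sum.inr a) y) x := by
    intro x y
    rcases x with a | a
    · simp only [Matrix.mul_apply, Fintype.sum_sum_type, Matrix.fromBlocks_apply₁₁,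
        Matrix.fromBlocks_apply₁₂, Matrix.one_apply, hN, Matrix.of_apply, ite_mul, one_mul,
        zero_mul, Finset.sum_ite_eq, Finset.mem_univ, if_true, Sum.elim_inl]
      ring
    · simp only [Matrix.mul_apply, Fintype.sum_sum_type, Matrix.fromBlocks_apply₂₁,
        Matrix.fromBlocks_apply₂₂, Matrix.one_apply, Matrix.zero_apply, ite_mul, one_mul,
        zero_mul, Finset.sum_ite_eq, Finset.mem_univ, if_true, Sum.elim_inr, zero_add,
        Finset.sum_const_zero]
  have key : (Matrix.fromBlocks (1 : Matrix (α × Fin b) (α × Fin b) ℝ) N 0 (1 : Matrix α α ℝ)) * Mh = Matrix.fromBlocks Dm 0 Cm Bm := by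
    ext x y
    rw [mulapp]
    rcases x with ⟨r, s⟩ | r <;> rcases y with ⟨c, d⟩ | c
    · simp only [Sum.elim_inl, hMhll, hMhrl, hDm, Matrix.fromBlocks_apply₁₁, Matrix.of_apply]
      ring
    · simp only [Sum.elim_inl, hMhlr, hMhrr, Matrix.fromBlocks_apply₁₂, Matrix.zero_apply]
      field_simp
      ring
    · simp only [Sum.elim_inr, hMhrl, hCm, Matrix.fromBlocks_apply₂₁, Matrix.of_apply]
    · simp only [Sum.elim_inr, hMhrr, hBm, Matrix.fromBlocks_apply₂₂, Matrix.of_apply]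
  -- determinants
  have hdetMh : Mh.det = Dm.det * Bm.det := by
    have h1 : (Matrix.fromBlocks (1 : Matrix (α × Fin b) (α × Fin b) ℝ) N 0 1).det = 1 := by
      rw [Matrix.det_fromBlocks_zero₂₁]
      simp
    have := congrArg Matrix.det key
    rw [Matrix.det_mul, h1, one_mul, Matrix.det_fromBlocks_zero₁₂] at this
    exact this
  have hBmdet : Bm.det = v t ^ Fintype.card α * Matrix.det (Matrix.of fun r c : α => F r c 0) := by
    have : Bm = v t • Matrix.of fun r c : α => F r c 0 := by
      ext r c
      simp [hBm, mul_comm]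
    rw [this, Matrix.det_smul]
  refine ⟨ε₀, hε₀, ?_⟩
  have h2 : M.det = ε₀ * Mh.det := by
    rw [hdet0]
    rcases hε₀ with h | h <;> rw [h] <;> ring
  rw [h2, hdetMh, hBmdet]
  ring

/-- One-dimensional version of `step`. -/
lemma stepOne (b : ℕ) (Q : Matrix (Fin (b + 1)) (Fin (b + 1)) ℝ) (v : Fin (b + 1) → ℝ)
    (hQ : ∀ s, Q s 0 = v s) (t : Fin (b + 1)) (hv : v t ≠ 0) :
    ∃ ε : ℝ, IsPM1 ε ∧
      Q.det = ε * (v t * Matrix.det (Matrix.of fun s d : Fin b =>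
        Q (t.succAbove s) d.succ - v (t.succAbove s) / v t * Q t d.succ)) := by
  obtain ⟨ε, hε, h⟩ := step (α := Unit) b (fun _ _ _ => 1) (fun s _ d => Q s d) v
    (fun s _ => hQ s) t hv
  have h1 : Matrix.det (Matrix.of fun rs cd : Unit × Fin (b + 1) =>
      (1 : ℝ) * Q rs.2 cd.2) = Q.det := by
    rw [← Matrix.det_submatrix_equiv_self (Equiv.punitProd (Fin (b + 1))).symm]
    congr 1
    ext s d
    simp
  have h2 : Matrix.det (Matrix.of fun rs cd : Unit × Fin b =>
      (1 : ℝ) * (Q (t.succAbove rs.2) cd.2.succ - v (t.succAbove rs.2) / v t * Q t cd.2.succ))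
      = Matrix.det (Matrix.of fun s d : Fin b =>
        Q (t.succAbove s) d.succ - v (t.succAbove s) / v t * Q t d.succ) := by
    rw [← Matrix.det_submatrix_equiv_self (Equiv.punitProd (Fin b)).symm]
    congr 1
    ext s d
    simp
  have h3 : Matrix.det (Matrix.of fun r c : Unit => (1:ℝ)) = 1 := by
    rw [Matrix.det_unique]
    simp
  rw [h1, h2, h3] at h
  refine ⟨ε, hε, ?_⟩
  rw [h]
  simp only [Fintype.card_unit, pow_one, mul_one]

def L1Prop (m : ℕ) : Prop :=
  ∀ (p : Fin m → Fin m → Fin (m + 1) → ℝ) (q : Fin (m + 1) → Fin m → Fin (m + 1) → ℝ),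
    (∀ (k i : Fin m) (j j' : Fin (m + 1)), (i : ℕ) < (j : ℕ) → (i : ℕ) < (j' : ℕ) →
      p k i j = p k i j') →
    (∀ (l : Fin (m + 1)) (i i' : Fin m) (j : Fin (m + 1)), (j : ℕ) ≤ (i : ℕ) →
      (j : ℕ) ≤ (i' : ℕ) → q l i j = q l i' j) →
    ∃ ε : ℝ, IsPM1 ε ∧
      Matrix.det (Matrix.of fun kl ij : Fin m × Fin (m + 1) =>
          p kl.1 ij.1 ij.2 * q kl.2 ij.1 ij.2)
        = ε * (∏ j, Matrix.det (Matrix.of fun k i : Fin m => p k i j))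
            * (∏ i, Matrix.det (Matrix.of fun l j : Fin (m + 1) => q l i j))

def L2Prop (m : ℕ) : Prop :=
  ∀ (p q : Fin (m + 1) → Fin (m + 1) → Fin (m + 1) → ℝ),
    (∀ (k i j j' : Fin (m + 1)), (i : ℕ) ≤ (j : ℕ) → (i : ℕ) ≤ (j' : ℕ) → p k i j = p k i j') →
    (∀ (l i i' j : Fin (m + 1)), (j : ℕ) < (i : ℕ) → (j : ℕ) < (i' : ℕ) → q l i j = q l i' j) →
    ∃ ε : ℝ, IsPM1 ε ∧
      Matrix.det (Matrix.of fun kl ij : Fin (m + 1) × Fin (m + 1) =>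
          p kl.1 ij.1 ij.2 * q kl.2 ij.1 ij.2)
        = ε * (∏ j, Matrix.det (Matrix.of fun k i : Fin (m + 1) => p k i j))
            * (∏ i, Matrix.det (Matrix.of fun l j : Fin (m + 1) => q l i j))

lemma L1_zero : L1Prop 0 := by
  intro p q hp hq
  exact ⟨1, IsPM1.one, by simp [Matrix.det_isEmpty]⟩

lemma L1_succ {m : ℕ} (h : L2Prop m) : L1Prop (m + 1) := by
  intro p q hp hq
  set v : Fin (m + 2) → ℝ := fun l => q l 0 0 with hvdef
  have hq0 : ∀ l i, q l i 0 = v l := fun l i => hq l i 0 0 (by simp) (by simp)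
  by_cases hall : ∀ l, v l = 0
  · refine ⟨1, IsPM1.one, ?_⟩
    have hL : Matrix.det (Matrix.of fun kl ij : Fin (m + 1) × Fin (m + 2) =>
        p kl.1 ij.1 ij.2 * q kl.2 ij.1 ij.2) = 0 := by
      apply Matrix.det_eq_zero_of_column_eq_zero ((0 : Fin (m + 1)), (0 : Fin (m + 2)))
      intro kl
      simp [hq0, hall]
    have hR : (∏ i, Matrix.det (Matrix.of fun l j : Fin (m + 2) => q l i j)) = 0 := by
      apply Finset.prod_eq_zero (Finset.mem_univ (0 : Fin (m + 1)))
      apply Matrix.det_eq_zero_of_column_eq_zero (0 : Fin (m + 2))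
      intro l
      simp [hq0, hall]
    rw [hL, hR]
    ring
  · push_neg at hall
    obtain ⟨t, ht⟩ := hall
    obtain ⟨ε₁, hε₁, h₁⟩ := step (m + 1) p q v (fun s c => hq0 s c) t ht
    set p₂ : Fin (m + 1) → Fin (m + 1) → Fin (m + 1) → ℝ := fun k i j => p k i j.succ with hp₂def
    set q₂ : Fin (m + 1) → Fin (m + 1) → Fin (m + 1) → ℝ := fun l i j =>
      q (t.succAbove l) i j.succ - v (t.succAbove l) / v t * q t i j.succ with hq₂def
    have hp₂ : ∀ (k i j j' : Fin (m + 1)), (i : ℕ) ≤ (j : ℕ) → (i : ℕ) ≤ (j' : ℕ) →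
        p₂ k i j = p₂ k i j' := by
      intro k i j j' hj hj'
      exact hp k i j.succ j'.succ (by simp only [Fin.val_succ]; omega) (by simp only [Fin.val_succ]; omega)
    have hq₂ : ∀ (l i i' j : Fin (m + 1)), (j : ℕ) < (i : ℕ) → (j : ℕ) < (i' : ℕ) →
        q₂ l i j = q₂ l i' j := by
      intro l i i' j hj hj'
      have e1 := hq (t.succAbove l) i i' j.succ (by simp only [Fin.val_succ]; omega)
        (by simp only [Fin.val_succ]; omega)
      have e2 := hq t i i' j.succ (by simp only [Fin.val_succ]; omega) (by simp only [Fin.val_succ]; omega)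
      simp only [hq₂def, e1, e2]
    obtain ⟨ε₂, hε₂, h₂⟩ := h p₂ q₂ hp₂ hq₂
    -- identify the D-block with the L2 matrix
    have hD : (Matrix.of fun rs cd : Fin (m + 1) × Fin (m + 1) =>
        p rs.1 cd.1 cd.2.succ * (q (t.succAbove rs.2) cd.1 cd.2.succ -
          v (t.succAbove rs.2) / v t * q t cd.1 cd.2.succ))
        = Matrix.of fun kl ij : Fin (m + 1) × Fin (m + 1) =>
            p₂ kl.1 ij.1 ij.2 * q₂ kl.2 ij.1 ij.2 := by
      ext rs cd
      simp only [Matrix.of_apply, hp₂def, hq₂def]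
    rw [hD, h₂] at h₁
    -- split the product over columns of P
    have hP : (∏ j, Matrix.det (Matrix.of fun k i : Fin (m + 1) => p k i j))
        = Matrix.det (Matrix.of fun r c : Fin (m + 1) => p r c 0)
          * ∏ j, Matrix.det (Matrix.of fun k i : Fin (m + 1) => p₂ k i j) := by
      rw [Fin.prod_univ_succ]
    -- reduce each Q_i determinant
    have hQi : ∀ i : Fin (m + 1), ∃ ε : ℝ, IsPM1 ε ∧
        Matrix.det (Matrix.of fun l j : Fin (m + 2) => q l i j)
          = ε * (v t * Matrix.det (Matrix.of fun l j : Fin (m + 1) => q₂ l i j)) := by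
      intro i
      obtain ⟨ε, hε, hQ⟩ := stepOne (m + 1) (Matrix.of fun l j : Fin (m + 2) => q l i j) v
        (fun s => hq0 s i) t ht
      refine ⟨ε, hε, ?_⟩
      rw [hQ]
      rfl
    choose εf hεf hQdet using hQi
    have hQ : (∏ i, Matrix.det (Matrix.of fun l j : Fin (m + 2) => q l i j))
        = (∏ i, εf i) * (v t ^ (m + 1)
            * ∏ i, Matrix.det (Matrix.of fun l j : Fin (m + 1) => q₂ l i j)) := by
      calc (∏ i, Matrix.det (Matrix.of fun l j : Fin (m + 2) => q l i j))
          = ∏ i, (εf i * (v t * Matrix.det (Matrix.of fun l j : Fin (m + 1) => q₂ l i j))) :=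
            Finset.prod_congr rfl fun i _ => hQdet i
        _ = (∏ i, εf i) * ∏ i, (v t * Matrix.det (Matrix.of fun l j : Fin (m + 1) => q₂ l i j)) :=
            Finset.prod_mul_distrib
        _ = (∏ i, εf i) * ((∏ _i : Fin (m + 1), v t)
              * ∏ i, Matrix.det (Matrix.of fun l j : Fin (m + 1) => q₂ l i j)) := by
            rw [Finset.prod_mul_distrib]
        _ = _ := by rw [Finset.prod_const]; simp
    have hE : IsPM1 (∏ i, εf i) :=
      Finset.prod_induction εf IsPM1 (fun a b => IsPM1.mul) IsPM1.one fun i _ => hεf i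
    refine ⟨ε₁ * ε₂ * ∏ i, εf i, (hε₁.mul hε₂).mul hE, ?_⟩
    rw [h₁, hP, hQ]
    have hcard : Fintype.card (Fin (m + 1)) = m + 1 := Fintype.card_fin _
    rw [hcard]
    rcases hE with hE1 | hE1 <;> rw [hE1] <;> ring

lemma L2_of_L1 {m : ℕ} (h : L1Prop m) : L2Prop m := by
  intro p q hp hq
  set u : Fin (m + 1) → ℝ := fun k => p k 0 0 with hudef
  have hp0 : ∀ k j, p k 0 j = u k := fun k j => hp k 0 j 0 (by simp) (by simp)
  by_cases hall : ∀ k, u k = 0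
  · refine ⟨1, IsPM1.one, ?_⟩
    have hL : Matrix.det (Matrix.of fun kl ij : Fin (m + 1) × Fin (m + 1) =>
        p kl.1 ij.1 ij.2 * q kl.2 ij.1 ij.2) = 0 := by
      apply Matrix.det_eq_zero_of_column_eq_zero ((0 : Fin (m + 1)), (0 : Fin (m + 1)))
      intro kl
      simp [hp0, hall]
    have hR : (∏ j, Matrix.det (Matrix.of fun k i : Fin (m + 1) => p k i j)) = 0 := by
      apply Finset.prod_eq_zero (Finset.mem_univ (0 : Fin (m + 1)))
      apply Matrix.det_eq_zero_of_column_eq_zero (0 : Fin (m + 1))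
      intro k
      simp [hp0, hall]
    rw [hL, hR]
    ring
  · push_neg at hall
    obtain ⟨t, ht⟩ := hall
    -- the swapped matrix
    obtain ⟨ε₁, hε₁, h₁⟩ := step (α := Fin (m + 1)) m (fun l j i => q l i j)
      (fun k j i => p k i j) u (fun s c => hp0 s c) t ht
    -- relate the original determinant to the swapped one
    have hswap : Matrix.det (Matrix.of fun kl ij : Fin (m + 1) × Fin (m + 1) =>
          p kl.1 ij.1 ij.2 * q kl.2 ij.1 ij.2)
        = Matrix.det (Matrix.of fun rs cd : Fin (m + 1) × Fin (m + 1) =>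
            q rs.1 cd.2 cd.1 * p rs.2 cd.2 cd.1) := by
      rw [← Matrix.det_submatrix_equiv_self (Equiv.prodComm (Fin (m + 1)) (Fin (m + 1)))
        (Matrix.of fun rs cd : Fin (m + 1) × Fin (m + 1) => q rs.1 cd.2 cd.1 * p rs.2 cd.2 cd.1)]
      congr 1
      ext kl ij
      simp only [Matrix.submatrix_apply, Equiv.prodComm_apply, Prod.swap_prod_mk,
        Matrix.of_apply, Prod.fst_swap, Prod.snd_swap]
      ring
    set p₁ : Fin m → Fin m → Fin (m + 1) → ℝ := fun k i j =>
      p (t.succAbove k) i.succ j - u (t.succAbove k) / u t * p t i.succ j with hp₁def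
    set q₁ : Fin (m + 1) → Fin m → Fin (m + 1) → ℝ := fun l i j => q l i.succ j with hq₁def
    have hp₁ : ∀ (k i : Fin m) (j j' : Fin (m + 1)), (i : ℕ) < (j : ℕ) → (i : ℕ) < (j' : ℕ) →
        p₁ k i j = p₁ k i j' := by
      intro k i j j' hj hj'
      have e1 := hp (t.succAbove k) i.succ j j' (by simp only [Fin.val_succ]; omega)
        (by simp only [Fin.val_succ]; omega)
      have e2 := hp t i.succ j j' (by simp only [Fin.val_succ]; omega)
        (by simp only [Fin.val_succ]; omega)
      simp only [hp₁def, e1, e2]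
    have hq₁ : ∀ (l : Fin (m + 1)) (i i' : Fin m) (j : Fin (m + 1)), (j : ℕ) ≤ (i : ℕ) →
        (j : ℕ) ≤ (i' : ℕ) → q₁ l i j = q₁ l i' j := by
      intro l i i' j hj hj'
      exact hq l i.succ i'.succ j (by simp only [Fin.val_succ]; omega)
        (by simp only [Fin.val_succ]; omega)
    obtain ⟨ε₂, hε₂, h₂⟩ := h p₁ q₁ hp₁ hq₁
    -- relate the D-block to the L1 matrix
    have hD : Matrix.det (Matrix.of fun rs cd : Fin (m + 1) × Fin m =>
          q rs.1 cd.2.succ cd.1 * (p (t.succAbove rs.2) cd.2.succ cd.1 -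
            u (t.succAbove rs.2) / u t * p t cd.2.succ cd.1))
        = Matrix.det (Matrix.of fun kl ij : Fin m × Fin (m + 1) =>
            p₁ kl.1 ij.1 ij.2 * q₁ kl.2 ij.1 ij.2) := by
      rw [← Matrix.det_submatrix_equiv_self (Equiv.prodComm (Fin m) (Fin (m + 1)))
        (Matrix.of fun rs cd : Fin (m + 1) × Fin m =>
          q rs.1 cd.2.succ cd.1 * (p (t.succAbove rs.2) cd.2.succ cd.1 -
            u (t.succAbove rs.2) / u t * p t cd.2.succ cd.1))]
      congr 1
      ext kl ij
      simp only [Matrix.submatrix_apply, Equiv.prodComm_apply, Prod.swap_prod_mk,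
        Matrix.of_apply, hp₁def, hq₁def, Prod.fst_swap, Prod.snd_swap]
      ring
    -- split the product over rows of Q
    have hQ : (∏ i, Matrix.det (Matrix.of fun l j : Fin (m + 1) => q l i j))
        = Matrix.det (Matrix.of fun l j : Fin (m + 1) => q l 0 j)
          * ∏ i, Matrix.det (Matrix.of fun l j : Fin (m + 1) => q₁ l i j) := by
      rw [Fin.prod_univ_succ]
    -- reduce each P_j determinant
    have hPj : ∀ j : Fin (m + 1), ∃ ε : ℝ, IsPM1 ε ∧
        Matrix.det (Matrix.of fun k i : Fin (m + 1) => p k i j)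
          = ε * (u t * Matrix.det (Matrix.of fun k i : Fin m => p₁ k i j)) := by
      intro j
      obtain ⟨ε, hε, hP⟩ := stepOne m (Matrix.of fun k i : Fin (m + 1) => p k i j) u
        (fun s => hp0 s j) t ht
      refine ⟨ε, hε, ?_⟩
      rw [hP]
      rfl
    choose εf hεf hPdet using hPj
    have hPsplit : (∏ j, Matrix.det (Matrix.of fun k i : Fin (m + 1) => p k i j))
        = (∏ j, εf j) * (u t ^ (m + 1)
            * ∏ j, Matrix.det (Matrix.of fun k i : Fin m => p₁ k i j)) := by
      calc (∏ j, Matrix.det (Matrix.of fun k i : Fin (m + 1) => p k i j))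
          = ∏ j, (εf j * (u t * Matrix.det (Matrix.of fun k i : Fin m => p₁ k i j))) :=
            Finset.prod_congr rfl fun j _ => hPdet j
        _ = (∏ j, εf j) * ∏ j, (u t * Matrix.det (Matrix.of fun k i : Fin m => p₁ k i j)) :=
            Finset.prod_mul_distrib
        _ = (∏ j, εf j) * ((∏ _j : Fin (m + 1), u t)
              * ∏ j, Matrix.det (Matrix.of fun k i : Fin m => p₁ k i j)) := by
            rw [Finset.prod_mul_distrib]
        _ = _ := by rw [Finset.prod_const]; simp
    have hE : IsPM1 (∏ j, εf j) :=
      Finset.prod_induction εf IsPM1 (fun a b => IsPM1.mul) IsPM1.one fun j _ => hεf j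
    refine ⟨ε₁ * ε₂ * ∏ j, εf j, (hε₁.mul hε₂).mul hE, ?_⟩
    rw [hswap, h₁, hD, h₂, hPsplit, hQ]
    have hcard : Fintype.card (Fin (m + 1)) = m + 1 := Fintype.card_fin _
    rw [hcard]
    rcases hE with hE1 | hE1 <;> rw [hE1] <;> ring

lemma L1_all : ∀ m, L1Prop m := by
  intro m
  induction m with
  | zero => exact L1_zero
  | succ n ih => exact L1_succ (L2_of_L1 ih)

/-- corollary: Padua-like even-grid determinant factorization: with
n = 2m even, X = {x_{2i}}, Y = {y_{2j}}, a = ∏(X − x_{2i+1}), b = ∏(Y − y_{2j+1}),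
the Vandermonde determinant of the entries of P∘Q at the grid X×Y equals
± ∏_{j=1}^{m+1} vdm(X, P_{:,j}) · ∏_{i=1}^{m} vdm(Y, Q_{i,:}). -/
theorem stmt14 (m : ℕ) (hm : 1 ≤ m) (x y : ℕ → ℝ)
    (hx : Set.InjOn x (Set.Icc 1 (2 * m + 1)))
    (hy : Set.InjOn y (Set.Icc 1 (2 * m + 2))) :
    ∃ ε : ℝ, (ε = 1 ∨ ε = -1) ∧
      Matrix.det (Matrix.of fun (kl ij : Fin m × Fin (m + 1)) =>
          (Pmat m (∏ i ∈ Finset.range (m + 1), (X - C (x (2 * i + 1)))) ij.1 ij.2).eval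
              (x (2 * ((kl.1 : ℕ) + 1))) *
          (Qmat m (∏ j ∈ Finset.range (m + 1), (X - C (y (2 * j + 1)))) ij.1 ij.2).eval
              (y (2 * ((kl.2 : ℕ) + 1)))) =
      ε * (∏ j : Fin (m + 1),
              Matrix.det (Matrix.of fun k i : Fin m =>
                (Pmat m (∏ i' ∈ Finset.range (m + 1),
                    (X - C (x (2 * i' + 1)))) i j).eval (x (2 * ((k : ℕ) + 1))))) *
          (∏ i : Fin m,
              Matrix.det (Matrix.of fun l j : Fin (m + 1) =>
                (Qmat m (∏ j' ∈ Finset.range (m + 1),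
                    (X - C (y (2 * j' + 1)))) i j).eval (y (2 * ((l : ℕ) + 1))))) := by
  set a : Polynomial ℝ := ∏ i ∈ Finset.range (m + 1), (X - C (x (2 * i + 1))) with ha
  set b : Polynomial ℝ := ∏ j ∈ Finset.range (m + 1), (X - C (y (2 * j + 1))) with hb
  set p : Fin m → Fin m → Fin (m + 1) → ℝ :=
    fun k i j => (Pmat m a i j).eval (x (2 * ((k : ℕ) + 1))) with hpdef
  set q : Fin (m + 1) → Fin m → Fin (m + 1) → ℝ :=
    fun l i j => (Qmat m b i j).eval (y (2 * ((l : ℕ) + 1))) with hqdef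
  have hp : ∀ (k i : Fin m) (j j' : Fin (m + 1)), (i : ℕ) < (j : ℕ) → (i : ℕ) < (j' : ℕ) →
      p k i j = p k i j' := by
    intro k i j j' hj hj'
    simp only [hpdef, Pmat, if_pos hj, if_pos hj']
  have hq : ∀ (l : Fin (m + 1)) (i i' : Fin m) (j : Fin (m + 1)), (j : ℕ) ≤ (i : ℕ) →
      (j : ℕ) ≤ (i' : ℕ) → q l i j = q l i' j := by
    intro l i i' j hj hj'
    simp only [hqdef, Qmat, if_pos hj, if_pos hj']
  exact L1_all m p q hp hq
end

section
/- Let N1, ..., Nn be m×m matrices with N1 invertible, and let Q_{:,j}(y_l) ∈ ℝ^m denote column vectors for 2 ≤ j ≤ n, 1 ≤ l ≤ n. Consider the block matrix M of size mn×mn whose (l, j) block is N_j·diag(Q_{:,j}(y_l)) for j ≥ 2 and N1 for j = 1 (each block m×m). Then det M = ± (det N1) · det M', where M' is the m(n−1)×m(n−1) block matrix with (l, j) block N_j·diag(Q_{:,j}(y_l) − Q_{:,j}(y_1)) for 2 ≤ l ≤ n, 2 ≤ j ≤ n. -/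
/-!
Every block row of the first block column equals `N 0`, so subtracting the first block row
from all the others clears that column below `N 0` without changing the determinant. The
result is block upper triangular with diagonal blocks `N 0` and `M'`, so the sign is `+1`.
-/

namespace Matrix

variable {R : Type*} [CommRing R] {m o : Type*} [Fintype m] [DecidableEq m]
  [Fintype o] [DecidableEq o]

theorem det_fromBlocks_mul_mul_add (A : Matrix m m R) (B : Matrix m o R) (E : Matrix o m R)
    (D : Matrix o o R) :
    (fromBlocks A B (E * A) (E * B + D)).det = A.det * D.det := by
  have hfactor :
      fromBlocks A B (E * A) (E * B + D) = fromBlocks 1 0 E 1 * fromBlocks A B 0 D := by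
    simp [fromBlocks_multiply]
  rw [hfactor, det_mul, det_fromBlocks_zero₁₂, det_fromBlocks_zero₂₁]
  simp

variable {n : ℕ} {α : Type*} [Fintype α] [DecidableEq α]

theorem det_eq_of_firstBlockCol_const (M : Matrix (Fin (n + 1) × α) (Fin (n + 1) × α) R)
    (h : ∀ l r s, M (l, r) (0, s) = M (0, r) (0, s)) :
    M.det = (M.submatrix (Prod.mk 0) (Prod.mk 0)).det *
      (of fun (lr jc : Fin n × α) =>
        M (lr.1.succ, lr.2) (jc.1.succ, jc.2) - M (0, lr.2) (jc.1.succ, jc.2)).det := by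
  let e : α ⊕ Fin n × α ≃ Fin (n + 1) × α :=
    (((finSuccEquiv n).prodCongr (Equiv.refl α)).trans optionProdEquiv).symm
  -- `E * X` copies the first block row `X` into each of the other `n` block rows.
  let E : Matrix (Fin n × α) α R := of fun lr s => (1 : Matrix α α R) lr.2 s
  rw [← det_submatrix_equiv_self e,
    ← det_fromBlocks_mul_mul_add _ (M.submatrix (Prod.mk 0) fun js => (js.1.succ, js.2)) E]
  congr 1
  ext (r | ⟨l, r⟩) (s | ⟨j, s⟩) <;> simp [e, E, h, mul_apply, one_apply]

end Matrix

theorem stmt17_general (m n : ℕ) (N : Fin (n + 1) → Matrix (Fin m) (Fin m) ℝ)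
    (v : Fin (n + 1) → Fin (n + 1) → Fin m → ℝ) :
    ∃ ε : ℝ, (ε = 1 ∨ ε = -1) ∧
      Matrix.det (Matrix.of fun (lr jc : Fin (n + 1) × Fin m) =>
          if jc.1 = 0 then N 0 lr.2 jc.2
          else (N jc.1 * Matrix.diagonal (v jc.1 lr.1)) lr.2 jc.2) =
      ε * (N 0).det *
        Matrix.det (Matrix.of fun (lr jc : Fin n × Fin m) =>
          (N jc.1.succ *
            Matrix.diagonal (fun r => v jc.1.succ lr.1.succ r - v jc.1.succ 0 r))
            lr.2 jc.2) := by
  refine ⟨1, Or.inl rfl, ?_⟩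
  rw [one_mul, Matrix.det_eq_of_firstBlockCol_const _ fun l r s => by simp]
  congr 2
  ext ⟨l, r⟩ ⟨j, s⟩
  simp [Matrix.mul_diagonal, mul_sub]

/-- Schur complement / block row-reduction step: for m×m matrices
N_1, ..., N_n with N_1 invertible, and vectors Q_{:,j}(y_l) = v j l ∈ ℝ^m, the block
matrix M with (l, j) block N_1 (for j = 1) and N_j·diag(v j l) (for j ≥ 2) satisfies
det M = ± det N_1 · det M', where M' has blocks N_j·diag(v j l − v j 1), 2 ≤ l, j ≤ n. -/
theorem stmt17 (m n : ℕ) (N : Fin (n + 1) → Matrix (Fin m) (Fin m) ℝ)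
    (hN : IsUnit (N 0).det) (v : Fin (n + 1) → Fin (n + 1) → Fin m → ℝ) :
    ∃ ε : ℝ, (ε = 1 ∨ ε = -1) ∧
      Matrix.det (Matrix.of fun (lr jc : Fin (n + 1) × Fin m) =>
          if jc.1 = 0 then N 0 lr.2 jc.2
          else (N jc.1 * Matrix.diagonal (v jc.1 lr.1)) lr.2 jc.2) =
      ε * (N 0).det *
        Matrix.det (Matrix.of fun (lr jc : Fin n × Fin m) =>
          (N jc.1.succ *
            Matrix.diagonal (fun r => v jc.1.succ lr.1.succ r - v jc.1.succ 0 r))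
            lr.2 jc.2) :=
  stmt17_general m n N v
end
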